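/- arXiv:math/9806007 — 9 statements merged into one kernel-verified Lean document; each statement's English description precedes it below -/
import Mathlib

section
/- Let L be a complete lattice of closed subspaces (equivalently, commuting orthogonal projections) of a Hilbert space H, containing 0 and I. If every nonzero projection P in L is the smallest element of L containing some finite family of atoms of L (L is hyperatomic), then every ascending sequence F_1 ≤ F_2 ≤ ... of projections in L is eventually constant. -/
noncomputable section

variable {H : Type*} [NormedAddCommGroup H] [InnerProductSpace ℂ H] [CompleteSpace H]

/-- `P` is an orthogonal projection on `H`. -/
def IsOrthoProj (P : H →L[ℂ] H) : Prop :=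
  IsSelfAdjoint P ∧ P.comp P = P

/-- Order on projections given by inclusion of ranges: `projLE P Q` iff `Q ∘ P = P`. -/
def projLE (P Q : H →L[ℂ] H) : Prop := Q.comp P = P

/-- The elements of `L` pairwise commute. -/
def PairwiseCommuting (L : Set (H →L[ℂ] H)) : Prop :=
  ∀ P ∈ L, ∀ Q ∈ L, P.comp Q = Q.comp P

/-- `T` leaves the range of every projection in `L` invariant, i.e. `T ∈ Alg L`. -/
def InAlg (L : Set (H →L[ℂ] H)) (T : H →L[ℂ] H) : Prop :=
  ∀ P ∈ L, P.comp (T.comp P) = T.comp P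

/-- `A` is an atom associated with the projection lattice `L`: a nonzero
interval `P - Q` from `L` such that every `F ∈ L` either contains `A`
or is orthogonal to it. -/
def IsAtomOf (L : Set (H →L[ℂ] H)) (A : H →L[ℂ] H) : Prop :=
  A ≠ 0 ∧ (∃ P ∈ L, ∃ Q ∈ L, projLE Q P ∧ Q ≠ P ∧ A = P - Q) ∧
    ∀ F ∈ L, A.comp F = 0 ∨ A.comp F = A

/-- `P` is the smallest element of `L` containing every member of `S`. -/
def GenBy (L : Set (H →L[ℂ] H)) (S : Set (H →L[ℂ] H)) (P : H →L[ℂ] H) : Prop :=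
  P ∈ L ∧ (∀ A ∈ S, projLE A P) ∧ ∀ F ∈ L, (∀ A ∈ S, projLE A F) → projLE P F

/-- Every nonzero projection in `L` is generated by finitely many atoms. -/
def Hyperatomic (L : Set (H →L[ℂ] H)) : Prop :=
  ∀ P ∈ L, P ≠ 0 → ∃ (n : ℕ) (A : Fin n → H →L[ℂ] H),
    (∀ i, IsAtomOf L (A i)) ∧ GenBy L (Set.range A) P

/-- `P` is a least upper bound of `S` within the class `C`, w.r.t. `projLE`. -/
def IsLUBWithin (C S : Set (H →L[ℂ] H)) (P : H →L[ℂ] H) : Prop :=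
  P ∈ C ∧ (∀ F ∈ S, projLE F P) ∧ ∀ Q ∈ C, (∀ F ∈ S, projLE F Q) → projLE P Q

/-- `L` is a complete lattice of orthogonal projections containing `0` and `I`:
every subset of `L` has a least upper bound lying in `L` which is a least
upper bound even among all orthogonal projections. -/
def CompleteProjLattice (L : Set (H →L[ℂ] H)) : Prop :=
  (∀ P ∈ L, IsOrthoProj P) ∧ (0 : H →L[ℂ] H) ∈ L ∧ (1 : H →L[ℂ] H) ∈ L ∧
    ∀ S ⊆ L, ∃ P ∈ L, IsLUBWithin {Q | IsOrthoProj Q} S P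

/-- `L` is a nest: a totally ordered complete lattice of orthogonal
projections containing `0` and `I`. -/
def IsNest (L : Set (H →L[ℂ] H)) : Prop :=
  CompleteProjLattice L ∧ ∀ P ∈ L, ∀ Q ∈ L, projLE P Q ∨ projLE Q P

/-- If the complete commutative projection lattice `L` is hyperatomic, then
every ascending sequence of projections in `L` is eventually constant. -/
theorem stmt0 (L : Set (H →L[ℂ] H))
    (hL : CompleteProjLattice L) (hcomm : PairwiseCommuting L)
    (hhyper : Hyperatomic L)
    (F : ℕ → H →L[ℂ] H) (hF : ∀ n, F n ∈ L)
    (hmono : ∀ n, projLE (F n) (F (n + 1))) :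
    ∃ N, ∀ n ≥ N, F n = F N := by
  obtain ⟨hproj, h0L, h1L, hsup⟩ := hL
  obtain ⟨P, hPL, hPproj, hub, hlub⟩ :=
    hsup (Set.range F) (by rintro _ ⟨n, rfl⟩; exact hF n)
  have hFleP : ∀ n, P.comp (F n) = F n := fun n => hub (F n) ⟨n, rfl⟩
  -- chain monotonicity
  have hchain : ∀ a b, a ≤ b → (F b).comp (F a) = F a := by
    intro a b hab
    induction b, hab using Nat.le_induction with
    | base => exact (hproj (F a) (hF a)).2
    | succ b hab ih =>
      have := hmono b
      unfold projLE at this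
      calc (F (b+1)).comp (F a) = (F (b+1)).comp ((F b).comp (F a)) := by rw [ih]
        _ = ((F (b+1)).comp (F b)).comp (F a) := by rw [ContinuousLinearMap.comp_assoc]
        _ = (F b).comp (F a) := by rw [this]
        _ = F a := ih
  by_cases hP0 : P = 0
  · refine ⟨0, fun n _ => ?_⟩
    have h1 : F n = 0 := by
      have := hFleP n; rw [hP0, ContinuousLinearMap.zero_comp] at this; exact this.symm
    have h2 : F 0 = 0 := by
      have := hFleP 0; rw [hP0, ContinuousLinearMap.zero_comp] at this; exact this.symm
    rw [h1, h2]
  obtain ⟨k, A, hatom, hgenL, hgenUB, hgenMin⟩ := hhyper P hPL hP0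
  -- basic properties of atoms
  have hAprop : ∀ i, IsSelfAdjoint (A i) ∧ (A i).comp (A i) = A i ∧
      ∀ G ∈ L, (A i).comp G = G.comp (A i) := by
    intro i
    obtain ⟨hne, ⟨P', hP'L, Q', hQ'L, hQP, hQneP, hAeq⟩, hcompr⟩ := hatom i
    have hPP : P'.comp P' = P' := (hproj P' hP'L).2
    have hQQ : Q'.comp Q' = Q' := (hproj Q' hQ'L).2
    have hPQ : P'.comp Q' = Q' := hQP
    have hQPc : Q'.comp P' = Q' := by rw [hcomm Q' hQ'L P' hP'L]; exact hPQ
    refine ⟨?_, ?_, ?_⟩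
    · rw [hAeq]
      exact (hproj P' hP'L).1.sub (hproj Q' hQ'L).1
    · rw [hAeq, ContinuousLinearMap.sub_comp, ContinuousLinearMap.comp_sub,
        ContinuousLinearMap.comp_sub, hPP, hQQ, hPQ, hQPc]
      abel
    · intro G hG
      rw [hAeq, ContinuousLinearMap.sub_comp, ContinuousLinearMap.comp_sub,
        hcomm P' hP'L G hG, hcomm Q' hQ'L G hG]
  have hAP : ∀ i, P.comp (A i) = A i := fun i => hgenUB (A i) ⟨i, rfl⟩
  have hAPc : ∀ i, (A i).comp P = A i := by
    intro i; rw [(hAprop i).2.2 P hPL]; exact hAP i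
  -- every atom is eventually dominated by the chain
  have hkey : ∀ i, ∃ m, (A i).comp (F m) = A i := by
    intro i
    by_contra hcon
    push_neg at hcon
    have h0 : ∀ m, (A i).comp (F m) = 0 := by
      intro m
      rcases (hatom i).2.2 (F m) (hF m) with h | h
      · exact h
      · exact absurd h (hcon m)
    -- R := P - A i is an orthogonal projection dominating the chain
    have hRproj : IsOrthoProj (P - A i) := by
      constructor
      · exact hPproj.1.sub (hAprop i).1
      · rw [ContinuousLinearMap.sub_comp, ContinuousLinearMap.comp_sub,
          ContinuousLinearMap.comp_sub, hPproj.2, hAP i, hAPc i, (hAprop i).2.1]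
        abel
    have hRub : ∀ G ∈ Set.range F, projLE G (P - A i) := by
      rintro _ ⟨m, rfl⟩
      unfold projLE
      rw [ContinuousLinearMap.sub_comp, hFleP m, h0 m, sub_zero]
    have hPR : (P - A i).comp P = P := hlub (P - A i) hRproj hRub
    rw [ContinuousLinearMap.sub_comp, hPproj.2, hAPc i] at hPR
    have : A i = 0 := by
      have := sub_eq_self.mp hPR
      exact this
    exact (hatom i).1 this
  choose m hm using hkey
  set N := Finset.univ.sup m with hN
  refine ⟨N, fun n hn => ?_⟩
  -- every atom is dominated by F N
  have hAFN : ∀ i, (F N).comp (A i) = A i := by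
    intro i
    have hmN : m i ≤ N := Finset.le_sup (Finset.mem_univ i)
    have hAFN' : (A i).comp (F N) = A i := by
      rcases (hatom i).2.2 (F N) (hF N) with h | h
      · exfalso
        apply (hatom i).1
        calc A i = (A i).comp (F (m i)) := (hm i).symm
          _ = (A i).comp ((F N).comp (F (m i))) := by rw [hchain (m i) N hmN]
          _ = ((A i).comp (F N)).comp (F (m i)) := by rw [ContinuousLinearMap.comp_assoc]
          _ = 0 := by rw [h, ContinuousLinearMap.zero_comp]
      · exact h
    rw [← (hAprop i).2.2 (F N) (hF N)]; exact hAFN'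
  have hPFN : (F N).comp P = P := hgenMin (F N) (hF N) (by rintro _ ⟨i, rfl⟩; exact hAFN i)
  have hFNP : F N = P := by
    have hc := hcomm P hPL (F N) (hF N)
    rw [hFleP N] at hc
    exact hc.trans hPFN
  have hFnP : F n = P := by
    have h1 : (F n).comp P = P := by
      calc (F n).comp P = (F n).comp ((F N).comp P) := by rw [hPFN]
        _ = ((F n).comp (F N)).comp P := by rw [ContinuousLinearMap.comp_assoc]
        _ = (F N).comp P := by rw [hchain N n hn]
        _ = P := hPFN
    have hc := hcomm P hPL (F n) (hF n)
    rw [hFleP n, h1] at hc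
    exact hc
  rw [hFnP, hFNP]
end
end

section
/- Let L be a nest (totally ordered complete lattice of orthogonal projections containing 0 and I) on a Hilbert space H, and suppose there is a strictly increasing sequence 0 < F_1 < F_2 < ... in L. Choose nonzero vectors x_n in the range of F_n - F_{n-1} with ‖x_n‖ = 1/n², and set x = Σ x_n, y = Σ n·x_n (both sums converge). Then sup over F ∈ L of ‖F^⊥ y‖ / ‖F^⊥ x‖ is infinite; in particular, there is no bounded operator T leaving every F ∈ L invariant with T x = y. -/
noncomputable section

variable {H : Type*} [NormedAddCommGroup H] [InnerProductSpace ℂ H] [CompleteSpace H]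

set_option linter.unusedVariables false
set_option maxHeartbeats 1000000

local notation "⟪" x ", " y "⟫" => @inner ℂ _ _ x y

lemma pyth_finset (f : ℕ → H) (h : ∀ m n, m ≠ n → ⟪f m, f n⟫ = 0) (s : Finset ℕ) :
    ‖∑ i ∈ s, f i‖ ^ 2 = ∑ i ∈ s, ‖f i‖ ^ 2 := by
  have key : ⟪∑ i ∈ s, f i, ∑ j ∈ s, f j⟫ = ∑ i ∈ s, ⟪f i, f i⟫ := by
    rw [sum_inner]
    refine Finset.sum_congr rfl fun i hi => ?_
    rw [inner_sum, Finset.sum_eq_single_of_mem i hi]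
    intro j _ hij
    exact h i j fun e => hij e.symm
  rw [inner_self_eq_norm_sq_to_K] at key
  simp only [inner_self_eq_norm_sq_to_K] at key
  exact_mod_cast key

lemma summable_of_orth (f : ℕ → H) (h : ∀ m n, m ≠ n → ⟪f m, f n⟫ = 0)
    (hs : Summable fun n => ‖f n‖ ^ 2) : Summable f := by
  rw [summable_iff_vanishing]
  intro e he
  obtain ⟨ε, hε, hball⟩ := Metric.mem_nhds_iff.mp he
  obtain ⟨s, hs'⟩ := hs.vanishing (Metric.ball_mem_nhds (0 : ℝ) (by positivity : (0:ℝ) < ε ^ 2))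
  refine ⟨s, fun t ht => hball ?_⟩
  have h1 := hs' t ht
  rw [Metric.mem_ball, dist_zero_right] at h1 ⊢
  have hnn : (0:ℝ) ≤ ∑ i ∈ t, ‖f i‖ ^ 2 := Finset.sum_nonneg fun i _ => sq_nonneg _
  rw [Real.norm_eq_abs, abs_of_nonneg hnn] at h1
  have h2 : ‖∑ i ∈ t, f i‖ ^ 2 = ∑ i ∈ t, ‖f i‖ ^ 2 := pyth_finset f h t
  nlinarith [norm_nonneg (∑ i ∈ t, f i)]

lemma norm_tsum_sq (f : ℕ → H) (h : ∀ m n, m ≠ n → ⟪f m, f n⟫ = 0)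
    (hf : Summable f) : ‖∑' n, f n‖ ^ 2 = ∑' n, ‖f n‖ ^ 2 := by
  have h1 : HasSum f (∑' n, f n) := hf.hasSum
  have h2 : Filter.Tendsto (fun s : Finset ℕ => ‖∑ i ∈ s, f i‖ ^ 2) Filter.atTop
      (nhds (‖∑' n, f n‖ ^ 2)) :=
    ((continuous_norm.pow 2).tendsto _).comp h1
  have h3 : HasSum (fun n => ‖f n‖ ^ 2) (‖∑' n, f n‖ ^ 2) := by
    have h4 := h2
    simp only [pyth_finset f h] at h4
    exact h4
  exact h3.tsum_eq.symm

/-- In a nest `L` containing a strictly increasing sequence `0 < F₁ < F₂ < ⋯`,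
with `xₙ` nonzero in the range of `Fₙ - Fₙ₋₁` of norm `1/n²`, the sums
`x = Σ xₙ` and `y = Σ n xₙ` converge, `sup_F ‖F^⊥ y‖/‖F^⊥ x‖ = ∞`, and no
operator of `Alg L` maps `x` to `y`. -/
theorem stmt4 (L : Set (H →L[ℂ] H)) (hnest : IsNest L)
    (F : ℕ → H →L[ℂ] H) (hF : ∀ n, F n ∈ L) (hF0 : F 0 = 0)
    (hinc : ∀ n, projLE (F n) (F (n + 1)) ∧ F n ≠ F (n + 1))
    (xv : ℕ → H) (hx0 : xv 0 = 0)
    (hxr : ∀ n, 1 ≤ n → (F n - F (n - 1)) (xv n) = xv n)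
    (hxn : ∀ n, 1 ≤ n → ‖xv n‖ = 1 / (n : ℝ) ^ 2) :
    Summable xv ∧ Summable (fun n : ℕ => (n : ℂ) • xv n) ∧
    (∀ C : ℝ, ∃ Fp ∈ L,
      ‖(1 - Fp) (∑' n : ℕ, (n : ℂ) • xv n)‖ > C * ‖(1 - Fp) (∑' n, xv n)‖) ∧
    ¬ ∃ T : H →L[ℂ] H, InAlg L T ∧ T (∑' n, xv n) = ∑' n : ℕ, (n : ℂ) • xv n := by
  obtain ⟨⟨hproj, h0L, h1L, _⟩, htot⟩ := hnest
  have hadj : ∀ P ∈ L, ContinuousLinearMap.adjoint P = P := fun P hP =>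
    ContinuousLinearMap.isSelfAdjoint_iff'.mp (hproj P hP).1
  have hid : ∀ n, ∀ v : H, F n (F n v) = F n v := by
    intro n v
    have h := (hproj _ (hF n)).2
    calc F n (F n v) = ((F n).comp (F n)) v := rfl
    _ = F n v := by rw [h]
  -- monotonicity
  have hle : ∀ m n : ℕ, m ≤ n → (F n).comp (F m) = F m := by
    intro m n hmn
    induction n, hmn using Nat.le_induction with
    | base => exact (hproj _ (hF m)).2
    | succ n hmn ih =>
      have h1 : (F (n+1)).comp (F n) = F n := (hinc n).1
      calc (F (n+1)).comp (F m) = (F (n+1)).comp ((F n).comp (F m)) := by rw [ih]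
      _ = ((F (n+1)).comp (F n)).comp (F m) := by rw [ContinuousLinearMap.comp_assoc]
      _ = F m := by rw [h1, ih]
  have hcomm : ∀ m n : ℕ, m ≤ n → (F m).comp (F n) = F m := by
    intro m n hmn
    have h1 := congrArg ContinuousLinearMap.adjoint (hle m n hmn)
    rwa [ContinuousLinearMap.adjoint_comp, hadj _ (hF m), hadj _ (hF n)] at h1
  have hle' : ∀ m n : ℕ, m ≤ n → ∀ v : H, F n (F m v) = F m v := by
    intro m n hmn v
    calc F n (F m v) = ((F n).comp (F m)) v := rfl
    _ = F m v := by rw [hle m n hmn]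
  have hcomm' : ∀ m n : ℕ, m ≤ n → ∀ v : H, F m (F n v) = F m v := by
    intro m n hmn v
    calc F m (F n v) = ((F m).comp (F n)) v := rfl
    _ = F m v := by rw [hcomm m n hmn]
  -- key pointwise facts
  have key0 : ∀ n, 1 ≤ n → F (n - 1) (xv n) = 0 := by
    intro n hn
    have h := hxr n hn
    have hb : F (n-1) (xv n) = F (n-1) (F n (xv n)) - F (n-1) (F (n-1) (xv n)) := by
      conv_lhs => rw [← h]
      simp [ContinuousLinearMap.sub_apply, map_sub]
    rw [hcomm' (n-1) n (Nat.sub_le n 1) (xv n), hid (n-1) (xv n), sub_self] at hb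
    exact hb
  have keyn : ∀ n, 1 ≤ n → F n (xv n) = xv n := by
    intro n hn
    have h := hxr n hn
    have : xv n = F n (xv n) - F (n-1) (xv n) := by
      conv_lhs => rw [← h]
      simp [ContinuousLinearMap.sub_apply]
    rw [key0 n hn, sub_zero] at this
    exact this.symm
  have keylt : ∀ m n : ℕ, m < n → F m (xv n) = 0 := by
    intro m n h
    have hn : 1 ≤ n := by omega
    have h1 : F m (xv n) = F m (F (n-1) (xv n)) := (hcomm' m (n-1) (by omega) (xv n)).symm
    rw [key0 n hn, map_zero] at h1
    exact h1
  have keyle : ∀ m n : ℕ, n ≤ m → F m (xv n) = xv n := by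
    intro m n h
    rcases Nat.eq_zero_or_pos n with rfl | hn
    · rw [hx0, map_zero]
    · calc F m (xv n) = F m (F n (xv n)) := by rw [keyn n hn]
      _ = F n (xv n) := hle' n m h (xv n)
      _ = xv n := keyn n hn
  -- orthogonality
  have orth : ∀ m n : ℕ, m ≠ n → ⟪xv m, xv n⟫ = 0 := by
    intro m n hmn
    rcases Nat.lt_or_ge m n with h | h
    · rcases Nat.eq_zero_or_pos m with rfl | hm
      · rw [hx0, inner_zero_left]
      · calc ⟪xv m, xv n⟫ = ⟪F m (xv m), xv n⟫ := by rw [keyn m hm]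
        _ = ⟪(ContinuousLinearMap.adjoint (F m)) (xv m), xv n⟫ := by rw [hadj _ (hF m)]
        _ = ⟪xv m, F m (xv n)⟫ := ContinuousLinearMap.adjoint_inner_left (F m) (xv n) (xv m)
        _ = 0 := by rw [keylt m n h, inner_zero_right]
    · have h' : n < m := lt_of_le_of_ne h fun e => hmn e.symm
      rcases Nat.eq_zero_or_pos n with rfl | hn
      · rw [hx0, inner_zero_right]
      · calc ⟪xv m, xv n⟫ = ⟪xv m, F n (xv n)⟫ := by rw [keyn n hn]
        _ = ⟪(ContinuousLinearMap.adjoint (F n)) (xv m), xv n⟫ :=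
          (ContinuousLinearMap.adjoint_inner_left (F n) (xv n) (xv m)).symm
        _ = ⟪F n (xv m), xv n⟫ := by rw [hadj _ (hF n)]
        _ = 0 := by rw [keylt n m h', inner_zero_left]
  -- norms
  have hnormx : ∀ n : ℕ, ‖xv n‖ = 1 / (n : ℝ) ^ 2 := by
    intro n
    rcases Nat.eq_zero_or_pos n with rfl | hn
    · simp [hx0]
    · exact hxn n hn
  have S2 : Summable (fun n : ℕ => 1 / (n : ℝ) ^ 2) := Real.summable_one_div_nat_pow.mpr one_lt_two
  have hsx : Summable xv := by
    refine Summable.of_norm ?_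
    have : (fun n : ℕ => ‖xv n‖) = fun n : ℕ => 1 / (n : ℝ) ^ 2 := funext hnormx
    rw [this]; exact S2
  have orth_y : ∀ m n : ℕ, m ≠ n → ⟪(m : ℂ) • xv m, (n : ℂ) • xv n⟫ = 0 := by
    intro m n h
    rw [inner_smul_left, inner_smul_right, orth m n h, mul_zero, mul_zero]
  have hynormsq : ∀ n : ℕ, ‖(n : ℂ) • xv n‖ ^ 2 = 1 / (n : ℝ) ^ 2 := by
    intro n
    rcases Nat.eq_zero_or_pos n with rfl | hn
    · simp [hx0]
    · have hn0 : (n : ℝ) ≠ 0 := Nat.cast_ne_zero.mpr (by omega)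
      rw [norm_smul, Complex.norm_natCast, hxn n hn]
      field_simp
  have hsy : Summable (fun n : ℕ => (n : ℂ) • xv n) := by
    refine summable_of_orth _ orth_y ?_
    have : (fun n : ℕ => ‖(n : ℂ) • xv n‖ ^ 2) = fun n : ℕ => 1 / (n : ℝ) ^ 2 :=
      funext hynormsq
    rw [this]; exact S2
  -- main estimate
  have main : ∀ C : ℝ, ∃ Fp ∈ L,
      ‖(1 - Fp) (∑' n : ℕ, (n : ℂ) • xv n)‖ > C * ‖(1 - Fp) (∑' n, xv n)‖ := by
    intro C
    obtain ⟨N, hN⟩ := exists_nat_gt C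
    refine ⟨F N, hF N, ?_⟩
    set P : H →L[ℂ] H := 1 - F N with hP
    set x' : ℕ → H := fun n => if N < n then xv n else 0 with hx'
    set y' : ℕ → H := fun n => if N < n then (n : ℂ) • xv n else 0 with hy'
    have hPx : ∀ n, P (xv n) = x' n := by
      intro n
      by_cases h : N < n
      · simp only [hx', if_pos h]
        have h1 : F N (xv n) = 0 := keylt N n h
        simp [hP, ContinuousLinearMap.sub_apply, h1]
      · simp only [hx', if_neg h]
        have h1 : F N (xv n) = xv n := keyle N n (by omega)
        simp [hP, ContinuousLinearMap.sub_apply, h1]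
    have hPy : ∀ n : ℕ, P ((n : ℂ) • xv n) = y' n := by
      intro n
      rw [map_smul, hPx n]
      by_cases h : N < n <;> simp [hx', hy', h]
    have orth_x' : ∀ m n : ℕ, m ≠ n → ⟪x' m, x' n⟫ = 0 := by
      intro m n h
      simp only [hx']
      split_ifs <;> simp [orth m n h]
    have orth_y' : ∀ m n : ℕ, m ≠ n → ⟪y' m, y' n⟫ = 0 := by
      intro m n h
      simp only [hy']
      split_ifs <;> simp [orth_y m n h]
    have hsx' : Summable x' :=
      hsx.summable_of_eq_zero_or_self fun n => by
        simp only [hx']; split_ifs <;> simp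
    have hsy' : Summable y' :=
      hsy.summable_of_eq_zero_or_self fun n => by
        simp only [hy']; split_ifs <;> simp
    have e1 : P (∑' n, xv n) = ∑' n, x' n := by
      rw [P.map_tsum hsx]; exact tsum_congr hPx
    have e2 : P (∑' n : ℕ, (n : ℂ) • xv n) = ∑' n, y' n := by
      rw [P.map_tsum hsy]; exact tsum_congr hPy
    have hsqx' : Summable (fun n : ℕ => ‖x' n‖ ^ 2) := by
      have base : Summable (fun n : ℕ => ‖xv n‖ ^ 2) := by
        have h4 : Summable (fun n : ℕ => 1 / (n : ℝ) ^ 4) :=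
          Real.summable_one_div_nat_pow.mpr (by norm_num)
        have : (fun n : ℕ => ‖xv n‖ ^ 2) = fun n : ℕ => 1 / (n : ℝ) ^ 4 := by
          funext n
          rw [hnormx n, div_pow, one_pow, ← pow_mul]
        rw [this]; exact h4
      exact base.summable_of_eq_zero_or_self fun n => by
        simp only [hx']; split_ifs <;> simp
    have hsqy' : Summable (fun n : ℕ => ‖y' n‖ ^ 2) := by
      have base : Summable (fun n : ℕ => ‖(n : ℂ) • xv n‖ ^ 2) := by
        have : (fun n : ℕ => ‖(n : ℂ) • xv n‖ ^ 2) = fun n : ℕ => 1 / (n : ℝ) ^ 2 :=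
          funext hynormsq
        rw [this]; exact S2
      exact base.summable_of_eq_zero_or_self fun n => by
        simp only [hy']; split_ifs <;> simp
    have hnx' : ‖∑' n, x' n‖ ^ 2 = ∑' n, ‖x' n‖ ^ 2 := norm_tsum_sq x' orth_x' hsx'
    have hny' : ‖∑' n, y' n‖ ^ 2 = ∑' n, ‖y' n‖ ^ 2 := norm_tsum_sq y' orth_y' hsy'
    -- termwise comparison
    have hterm : ∀ n : ℕ, ((N : ℝ) + 1) ^ 2 * ‖x' n‖ ^ 2 ≤ ‖y' n‖ ^ 2 := by
      intro n
      by_cases h : N < n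
      · simp only [hx', hy', if_pos h]
        have h1 : ‖(n : ℂ) • xv n‖ ^ 2 = (n : ℝ) ^ 2 * ‖xv n‖ ^ 2 := by
          rw [norm_smul, Complex.norm_natCast, mul_pow]
        rw [h1]
        have h2 : ((N : ℝ) + 1) ≤ (n : ℝ) := by exact_mod_cast Nat.succ_le_of_lt h
        have h3 : ((N : ℝ) + 1) ^ 2 ≤ (n : ℝ) ^ 2 := by nlinarith [Nat.cast_nonneg (α := ℝ) N]
        exact mul_le_mul_of_nonneg_right h3 (sq_nonneg _)
      · simp only [hx', hy', if_neg h]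
        simp
    have htsum : ((N : ℝ) + 1) ^ 2 * ∑' n, ‖x' n‖ ^ 2 ≤ ∑' n, ‖y' n‖ ^ 2 := by
      rw [← tsum_mul_left]
      exact Summable.tsum_le_tsum hterm (hsqx'.mul_left _) hsqy'
    have hpos : 0 < ∑' n, ‖x' n‖ ^ 2 := by
      have h1 : ‖x' (N + 1)‖ ^ 2 ≤ ∑' n, ‖x' n‖ ^ 2 :=
        Summable.le_tsum hsqx' (N + 1) fun j _ => sq_nonneg _
      have h2 : 0 < ‖x' (N + 1)‖ ^ 2 := by
        have : x' (N + 1) = xv (N + 1) := by simp [hx']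
        rw [this, hxn (N + 1) (by omega)]
        positivity
      linarith
    rw [e1, e2]
    set a := ‖∑' n, y' n‖
    set b := ‖∑' n, x' n‖
    have hb : 0 < b := by
      by_contra hcon
      push_neg at hcon
      have : b = 0 := le_antisymm hcon (norm_nonneg _)
      rw [← hnx', this] at hpos
      simp at hpos
    have hab : ((N : ℝ) + 1) * b ≤ a := by
      have h1 : (((N : ℝ) + 1) * b) ^ 2 ≤ a ^ 2 := by
        rw [mul_pow, hnx', hny']
        exact htsum
      nlinarith [norm_nonneg (∑' n, y' n), norm_nonneg (∑' n, x' n),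
        Nat.cast_nonneg (α := ℝ) N]
    calc C * b < ((N : ℝ) + 1) * b := by
          apply mul_lt_mul_of_pos_right _ hb
          linarith
    _ ≤ a := hab
  refine ⟨hsx, hsy, main, ?_⟩
  -- no interpolating operator
  rintro ⟨T, hT, hTx⟩
  obtain ⟨Fp, hFpL, hgt⟩ := main ‖T‖
  have hadjP : ContinuousLinearMap.adjoint Fp = Fp := hadj Fp hFpL
  have hidP : ∀ v : H, Fp (Fp v) = Fp v := by
    intro v
    have h := (hproj _ hFpL).2
    calc Fp (Fp v) = (Fp.comp Fp) v := rfl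
    _ = Fp v := by rw [h]
  have hcontr : ∀ z : H, ‖(1 - Fp) z‖ ≤ ‖z‖ := by
    intro z
    set w : H := (1 - Fp) z with hw
    have hw' : w = z - Fp z := by simp [hw, ContinuousLinearMap.sub_apply]
    have hFw : Fp w = 0 := by rw [hw', map_sub, hidP z, sub_self]
    have h1 : ⟪w, w⟫ = ⟪z, w⟫ := by
      calc ⟪w, w⟫ = ⟪z, w⟫ - ⟪Fp z, w⟫ := by rw [hw', inner_sub_left]
      _ = ⟪z, w⟫ - ⟪(ContinuousLinearMap.adjoint Fp) z, w⟫ := by rw [hadjP]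
      _ = ⟪z, w⟫ - ⟪z, Fp w⟫ := by rw [ContinuousLinearMap.adjoint_inner_left]
      _ = ⟪z, w⟫ := by rw [hFw, inner_zero_right, sub_zero]
    have h2 : ‖w‖ ^ 2 ≤ ‖z‖ * ‖w‖ := by
      have h3 : RCLike.re ⟪z, w⟫ ≤ ‖z‖ * ‖w‖ := re_inner_le_norm (𝕜 := ℂ) z w
      have h4 : RCLike.re ⟪w, w⟫ = ‖w‖ ^ 2 := inner_self_eq_norm_sq (𝕜 := ℂ) w
      rw [← h4, h1]
      exact h3
    nlinarith [norm_nonneg w, norm_nonneg z]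
  set xx := ∑' n, xv n with hxx
  have hinv : Fp (T (Fp xx)) = T (Fp xx) := by
    have h := hT Fp hFpL
    calc Fp (T (Fp xx)) = (Fp.comp (T.comp Fp)) xx := rfl
    _ = (T.comp Fp) xx := by rw [h]
    _ = T (Fp xx) := rfl
  have hz : (1 - Fp) (T (Fp xx)) = 0 := by
    simp [ContinuousLinearMap.sub_apply, hinv]
  have hkey : (1 - Fp) (∑' n : ℕ, (n : ℂ) • xv n) = (1 - Fp) (T ((1 - Fp) xx)) := by
    rw [← hTx]
    have hsplit : xx = (1 - Fp) xx + Fp xx := by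
      simp [ContinuousLinearMap.sub_apply]
    calc (1 - Fp) (T xx) = (1 - Fp) (T ((1 - Fp) xx + Fp xx)) := by rw [← hsplit]
    _ = (1 - Fp) (T ((1 - Fp) xx)) + (1 - Fp) (T (Fp xx)) := by rw [map_add, map_add]
    _ = (1 - Fp) (T ((1 - Fp) xx)) := by rw [hz, add_zero]
  have hle2 : ‖(1 - Fp) (∑' n : ℕ, (n : ℂ) • xv n)‖ ≤ ‖T‖ * ‖(1 - Fp) xx‖ := by
    rw [hkey]
    exact (hcontr _).trans (T.le_opNorm _)
  rw [hxx] at hgt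
  linarith
end
end

section
/- Let L be a commutative subspace lattice on a Hilbert space, let A be an atom of L, and let P = E(A) be the smallest projection in L containing A. Then A ≤ P_-^⊥, where P_- = ⋁ { F ∈ L : F is not ≥ P }. -/
noncomputable section

variable {H : Type*} [NormedAddCommGroup H] [InnerProductSpace ℂ H] [CompleteSpace H]

/-- If `A` is an atom of the commutative subspace lattice `L` and `P = E(A)` is
the smallest projection in `L` containing `A`, then `A ≤ P₋^⊥`, where
`P₋ = ⋁ {F ∈ L : F ≱ P}`. -/
theorem stmt7 (L : Set (H →L[ℂ] H)) (hL : ∀ P ∈ L, IsOrthoProj P)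
    (hcomm : PairwiseCommuting L)
    (A P Pm : H →L[ℂ] H) (hA : IsAtomOf L A)
    (hP : GenBy L {A} P)
    (hPm : IsLUBWithin {Q | IsOrthoProj Q} {F | F ∈ L ∧ ¬ projLE P F} Pm) :
    projLE A (1 - Pm) := by
  obtain ⟨hAne, ⟨P', hP'L, Q', hQ'L, hle, hne, hAeq⟩, hatom⟩ := hA
  have hsaP' := (hL P' hP'L).1
  have hsaQ' := (hL Q' hQ'L).1
  have hsaA : IsSelfAdjoint A := by rw [hAeq]; exact hsaP'.sub hsaQ'
  -- A commutes with every element of L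
  have hAcomm : ∀ F ∈ L, A.comp F = F.comp A := by
    intro F hF
    rw [hAeq, ContinuousLinearMap.sub_comp, ContinuousLinearMap.comp_sub,
      hcomm P' hP'L F hF, hcomm Q' hQ'L F hF]
  -- A is idempotent
  have hQ'P' : Q'.comp P' = Q' := by rw [hcomm Q' hQ'L P' hP'L]; exact hle
  have hidem : A.comp A = A := by
    rw [hAeq, ContinuousLinearMap.sub_comp, ContinuousLinearMap.comp_sub,
      ContinuousLinearMap.comp_sub, (hL P' hP'L).2, (hL Q' hQ'L).2, hle, hQ'P']
    abel
  -- 1 - A is an orthogonal projection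
  have hortho : IsOrthoProj (1 - A) := by
    constructor
    · have h1 : IsSelfAdjoint (1 : H →L[ℂ] H) := star_one _
      exact h1.sub hsaA
    · rw [ContinuousLinearMap.sub_comp, ContinuousLinearMap.comp_sub,
        ContinuousLinearMap.comp_sub, ContinuousLinearMap.one_def,
        ContinuousLinearMap.id_comp, ContinuousLinearMap.id_comp,
        ContinuousLinearMap.comp_id, hidem]
      abel
  -- every F in the set is below 1 - A
  have hub : ∀ F ∈ {F | F ∈ L ∧ ¬ projLE P F}, projLE F (1 - A) := by
    rintro F ⟨hFL, hFnP⟩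
    have hAF : A.comp F = 0 := by
      rcases hatom F hFL with h | h
      · exact h
      · exfalso
        apply hFnP
        apply hP.2.2 F hFL
        intro B hB
        rw [Set.mem_singleton_iff] at hB
        rw [hB]
        show F.comp A = A
        rw [← hAcomm F hFL, h]
    show (1 - A).comp F = F
    rw [ContinuousLinearMap.sub_comp, ContinuousLinearMap.one_def,
      ContinuousLinearMap.id_comp, hAF, sub_zero]
  have hPmle : projLE Pm (1 - A) := hPm.2.2 (1 - A) hortho hub
  -- deduce A.comp Pm = 0
  have hAPm : A.comp Pm = 0 := by
    have := hPmle
    rw [projLE, ContinuousLinearMap.sub_comp, ContinuousLinearMap.one_def,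
      ContinuousLinearMap.id_comp, sub_eq_self] at this
    exact this
  -- take adjoints: Pm.comp A = 0
  have hsaPm : IsSelfAdjoint Pm := hPm.1.1
  have hPmA : Pm.comp A = 0 := by
    have : star (A * Pm) = star (0 : H →L[ℂ] H) := by
      rw [show A * Pm = A.comp Pm from rfl, hAPm]
    rwa [star_mul, hsaPm.star_eq, hsaA.star_eq, star_zero] at this
  show (1 - Pm).comp A = A
  rw [ContinuousLinearMap.sub_comp, ContinuousLinearMap.one_def,
    ContinuousLinearMap.id_comp, hPmA, sub_zero]
end
end

section
/- Let L be a commutative subspace lattice and x, y vectors in the Hilbert space. Suppose there exists P ∈ L with x ∈ range(P_-^⊥) and y ∈ range(P), where P_- = ⋁{F ∈ L : F ≱ P}. If x ≠ 0, then the rank-one operator T = ‖x‖^{-2} (y ⊗ x*) (i.e., T z = ⟨z, x⟩ ‖x‖^{-2} y) belongs to Alg L and satisfies T x = y. -/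
noncomputable section

variable {H : Type*} [NormedAddCommGroup H] [InnerProductSpace ℂ H] [CompleteSpace H]

/-- If `x ∈ range P₋^⊥` and `y ∈ range P` for some `P ∈ L`, `x ≠ 0`, then the
rank-one operator `z ↦ ⟨z,x⟩ ‖x‖⁻² y` belongs to `Alg L` and maps `x` to `y`. -/
theorem stmt8 (L : Set (H →L[ℂ] H)) (hL : ∀ P ∈ L, IsOrthoProj P)
    (hcomm : PairwiseCommuting L)
    (x y : H) (hx : x ≠ 0)
    (P Pm : H →L[ℂ] H) (hPL : P ∈ L)
    (hPm : IsLUBWithin {Q | IsOrthoProj Q} {F | F ∈ L ∧ ¬ projLE P F} Pm)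
    (hxPm : (1 - Pm) x = x) (hyP : P y = y) :
    InAlg L ((‖x‖ ^ 2)⁻¹ • ((innerSL ℂ x).smulRight y)) ∧
      ((‖x‖ ^ 2)⁻¹ • ((innerSL ℂ x).smulRight y)) x = y := by
  classical
  have hTx : ((‖x‖ ^ 2)⁻¹ • ((innerSL ℂ x).smulRight y)) x = y := by
    have h : (inner ℂ x x : ℂ) = ((‖x‖ ^ 2 : ℝ) : ℂ) := by
      simp [inner_self_eq_norm_sq_to_K]
    simp only [ContinuousLinearMap.smul_apply, ContinuousLinearMap.smulRight_apply,
      innerSL_apply_apply, h]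
    rw [← Complex.coe_smul, smul_smul]
    norm_cast
    rw [inv_mul_cancel₀ (pow_ne_zero _ (norm_ne_zero_iff.mpr hx)), one_smul]
  refine ⟨?_, hTx⟩
  intro F hF
  by_cases hPF : projLE P F
  · have hFy : F y = y := by
      conv_lhs => rw [← hyP, ← ContinuousLinearMap.comp_apply, hPF]
      exact hyP
    ext z
    simp [ContinuousLinearMap.comp_apply, hFy]
  · have hFPm : Pm.comp F = F := hPm.2.1 F ⟨hF, hPF⟩
    have hPmx : Pm x = 0 := by
      have h := hxPm
      simp only [ContinuousLinearMap.sub_apply, ContinuousLinearMap.one_apply] at h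
      linear_combination (norm := abel) -h
    have hsa : IsSelfAdjoint Pm := hPm.1.1
    ext z
    have hz : (inner ℂ x (F z) : ℂ) = 0 := by
      have h1 : F z = Pm (F z) := by
        rw [← ContinuousLinearMap.comp_apply, hFPm]
      rw [h1, ← ContinuousLinearMap.adjoint_inner_left, hsa.adjoint_eq, hPmx]
      simp
    simp [ContinuousLinearMap.comp_apply, hz]
end
end

section
/- Let L be a hyperatomic commutative subspace lattice on a separable Hilbert space and suppose atoms A_1, ..., A_n generate P = E(A_1,...,A_n) and are independent, i.e., A_i · E(A_j) = 0 for i ≠ j. If x is a vector with closure of M_x = {T x : T ∈ Alg L} equal to range P, then A_j x ≠ 0 for every j, and E(A_j)'s range is contained in M_x for each j; consequently M_x is closed and equals range P. -/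
noncomputable section

variable {H : Type*} [NormedAddCommGroup H] [InnerProductSpace ℂ H] [CompleteSpace H]

local notation "⟪" x ", " y "⟫" => @inner ℂ _ _ x y

private lemma stmt9_flip {p q : H →L[ℂ] H} (hp : IsSelfAdjoint p) (hq : IsSelfAdjoint q)
    (h : p * q = q) : q * p = q := by
  have h2 := congrArg star h
  rwa [star_mul, hp.star_eq, hq.star_eq] at h2

private lemma stmt9_inalg_zero (L : Set (H →L[ℂ] H)) : InAlg L (0 : H →L[ℂ] H) := by
  intro F hF
  simp

private lemma stmt9_inalg_add (L : Set (H →L[ℂ] H)) {T S : H →L[ℂ] H}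
    (hT : InAlg L T) (hS : InAlg L S) : InAlg L (T + S) := by
  intro F hF
  rw [ContinuousLinearMap.add_comp, ContinuousLinearMap.comp_add, hT F hF, hS F hF]

-- joinSeq block (tested already, pasted below)
private def joinSeq (E : ℕ → H →L[ℂ] H) : ℕ → (H →L[ℂ] H)
  | 0 => 0
  | k+1 => joinSeq E k + E k - joinSeq E k * E k

private lemma joinSeq_comm (E : ℕ → H →L[ℂ] H) (Q : H →L[ℂ] H)
    (h : ∀ i, Commute Q (E i)) : ∀ k, Commute Q (joinSeq E k)
  | 0 => Commute.zero_right Q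
  | k+1 => by
    have ih := joinSeq_comm E Q h k
    simp only [joinSeq]
    exact (ih.add_right (h k)).sub_right (ih.mul_right (h k))

private lemma joinSeq_idem (E : ℕ → H →L[ℂ] H)
    (hcom : ∀ i j, Commute (E i) (E j)) (hid : ∀ i, IsIdempotentElem (E i)) :
    ∀ k, IsIdempotentElem (joinSeq E k)
  | 0 => IsIdempotentElem.zero
  | k+1 => by
    simp only [joinSeq]
    exact IsIdempotentElem.add_sub_mul_of_commute
      ((joinSeq_comm E (E k) (fun i => hcom k i) k).symm)
      (joinSeq_idem E hcom hid k) (hid k)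

private lemma joinSeq_sa (E : ℕ → H →L[ℂ] H)
    (hcom : ∀ i j, Commute (E i) (E j)) (hsa : ∀ i, IsSelfAdjoint (E i)) :
    ∀ k, IsSelfAdjoint (joinSeq E k)
  | 0 => by exact .zero _
  | k+1 => by
    simp only [joinSeq]
    have ih := joinSeq_sa E hcom hsa k
    have hc : E k * joinSeq E k = joinSeq E k * E k :=
      (joinSeq_comm E (E k) (fun i => hcom k i) k).eq
    have hsmul : IsSelfAdjoint (joinSeq E k * E k) := by
      show star _ = _
      rw [star_mul, (hsa k).star_eq, ih.star_eq, hc]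
    exact (ih.add (hsa k)).sub hsmul

private lemma joinSeq_ge (E : ℕ → H →L[ℂ] H)
    (hcom : ∀ i j, Commute (E i) (E j)) (hid : ∀ i, IsIdempotentElem (E i)) :
    ∀ k, ∀ i, i < k → joinSeq E k * E i = E i := by
  intro k
  induction k with
  | zero => omega
  | succ k ih =>
    intro i hik
    simp only [joinSeq, sub_mul, add_mul]
    rcases Nat.lt_or_ge i k with h | h
    · have h1 : joinSeq E k * E i = E i := ih i h
      have h2 : E k * E i = E i * E k := (hcom k i).eq
      rw [h1, mul_assoc, h2, ← mul_assoc, h1]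
      abel
    · have hik' : i = k := by omega
      subst hik'
      rw [hid i, mul_assoc, hid i]
      abel

private lemma joinSeq_mem (E : ℕ → H →L[ℂ] H)
    (hcom : ∀ i j, Commute (E i) (E j)) (hid : ∀ i, IsIdempotentElem (E i)) :
    ∀ k, ∀ y : H, joinSeq E k y = y →
      ∃ v : ℕ → H, (∀ i, E i (v i) = v i) ∧ y = ∑ i ∈ Finset.range k, v i := by
  intro k
  induction k with
  | zero =>
    intro y hy
    refine ⟨fun _ => 0, fun i => map_zero _, ?_⟩
    simpa [joinSeq] using hy.symm
  | succ k ih =>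
    intro y hy
    set g := joinSeq E k with hg
    set e := E k with he
    have hcge : e * g = g * e := (joinSeq_comm E e (fun i => hcom k i) k).eq
    set u := g y with hu
    set w := e y - g (e y) with hw
    have hgu : g u = u := by
      show g (g y) = g y
      have : (g * g) y = g y := by rw [joinSeq_idem E hcom hid k]
      exact this
    have hew : e w = w := by
      show e (e y - g (e y)) = e y - g (e y)
      rw [map_sub]
      have h1 : e (e y) = e y := by
        have : (e * e) y = e y := by rw [hid k]
        exact this
      have h2 : e (g (e y)) = g (e (e y)) := by
        have : (e * g) (e y) = (g * e) (e y) := by rw [hcge]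
        exact this
      rw [h1, h2, h1]
    have hsum : u + w = y := by
      have h3 := hy
      simp only [joinSeq, ← hg, ← he, ContinuousLinearMap.sub_apply,
        ContinuousLinearMap.add_apply, ContinuousLinearMap.mul_apply] at h3
      rw [hu, hw]
      conv_rhs => rw [← h3]
      abel
    obtain ⟨v, hv, huv⟩ := ih u hgu
    refine ⟨Function.update v k w, ?_, ?_⟩
    · intro i
      rcases eq_or_ne i k with rfl | hne
      · simpa using hew
      · simpa [Function.update_of_ne hne] using hv i
    · rw [Finset.sum_range_succ, Function.update_self]
      have : ∑ i ∈ Finset.range k, Function.update v k w i = ∑ i ∈ Finset.range k, v i := by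
        apply Finset.sum_congr rfl
        intro i hi
        exact Function.update_of_ne (by simpa using (Finset.mem_range.mp hi).ne) w v
      rw [this, ← huv]
      exact hsum.symm


/-- In a hyperatomic CSL on a separable Hilbert space, if independent atoms
`A₁,…,Aₙ` generate `P = E(A₁,…,Aₙ)` and the closure of the orbit
`M_x = {T x : T ∈ Alg L}` is the range of `P`, then each `Aⱼ x ≠ 0`, the range
of each `E(Aⱼ)` lies in `M_x`, and `M_x` is closed and equals the range of `P`. -/
theorem stmt9 [TopologicalSpace.SeparableSpace H]
    (L : Set (H →L[ℂ] H)) (hL : CompleteProjLattice L)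
    (hcomm : PairwiseCommuting L) (hhyper : Hyperatomic L)
    (n : ℕ) (A E : Fin n → H →L[ℂ] H) (P : H →L[ℂ] H)
    (hA : ∀ i, IsAtomOf L (A i))
    (hE : ∀ i, GenBy L {A i} (E i))
    (hind : ∀ i j, i ≠ j → (A i).comp (E j) = 0)
    (hP : GenBy L (Set.range A) P)
    (x : H)
    (hclos : closure {y | ∃ T : H →L[ℂ] H, InAlg L T ∧ T x = y} = {y | P y = y}) :
    (∀ j, A j x ≠ 0) ∧
    (∀ j, ∀ w : H, E j w = w → ∃ T : H →L[ℂ] H, InAlg L T ∧ T x = w) ∧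
    IsClosed {y | ∃ T : H →L[ℂ] H, InAlg L T ∧ T x = y} ∧
    {y | ∃ T : H →L[ℂ] H, InAlg L T ∧ T x = y} = {y | P y = y} := by
  classical
  have hortho : ∀ F ∈ L, IsOrthoProj F := hL.1
  have hFid : ∀ F ∈ L, F * F = F := fun F hF => (hortho F hF).2
  have hFsa : ∀ F ∈ L, IsSelfAdjoint F := fun F hF => (hortho F hF).1
  have hEL : ∀ i, E i ∈ L := fun i => (hE i).1
  have hEsa : ∀ i, IsSelfAdjoint (E i) := fun i => hFsa _ (hEL i)
  have hEid : ∀ i, E i * E i = E i := fun i => hFid _ (hEL i)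
  have hEA : ∀ i, E i * A i = A i := fun i => (hE i).2.1 (A i) rfl
  have hAP : ∀ j, P * A j = A j := fun j => hP.2.1 (A j) ⟨j, rfl⟩
  -- atom facts
  have hAfacts : ∀ j, IsSelfAdjoint (A j) ∧ (A j * A j = A j) ∧
      (∀ T, InAlg L T → ∀ v, E j v = v → A j v = 0 → A j (T v) = 0) ∧
      (∀ F ∈ L, A j * F = 0 ∨ A j * F = A j) := by
    intro j
    obtain ⟨hAne, ⟨Pj, hPjL, Qj, hQjL, hQP, hQne, hAeq⟩, hatom⟩ := hA j
    have hPsa := hFsa _ hPjL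
    have hQsa := hFsa _ hQjL
    have hPid := hFid _ hPjL
    have hQid := hFid _ hQjL
    have hPQ : Pj * Qj = Qj := hQP
    have hQPm : Qj * Pj = Qj := stmt9_flip hPsa hQsa hPQ
    have hAsa : IsSelfAdjoint (A j) := by rw [hAeq]; exact hPsa.sub hQsa
    have hAid : A j * A j = A j := by
      rw [hAeq, sub_mul, mul_sub, mul_sub, hPid, hPQ, hQPm, hQid]
      abel
    have hPA : Pj * A j = A j := by rw [hAeq, mul_sub, hPid, hPQ]
    have hAQ : A j * Qj = 0 := by rw [hAeq, sub_mul, hPQ, hQid, sub_self]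
    have hPE : Pj * E j = E j := (hE j).2.2 Pj hPjL (by
      intro B hB
      rw [Set.mem_singleton_iff] at hB
      subst hB
      exact hPA)
    refine ⟨hAsa, hAid, ?_, hatom⟩
    intro T hT v hEv hAv
    have hPv : Pj v = v := by
      calc Pj v = Pj (E j v) := by rw [hEv]
      _ = (Pj * E j) v := rfl
      _ = E j v := by rw [hPE]
      _ = v := hEv
    have hQv : Qj v = v := by
      have h1 : Pj v - Qj v = 0 := by
        rw [← ContinuousLinearMap.sub_apply, ← hAeq]
        exact hAv
      have h2 : Pj v = Qj v := sub_eq_zero.mp h1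
      rw [← h2, hPv]
    have hz : A j * (T * Qj) = 0 := by
      have halg : Qj * (T * Qj) = T * Qj := hT Qj hQjL
      calc A j * (T * Qj) = A j * (Qj * (T * Qj)) := by rw [halg]
      _ = (A j * Qj) * (T * Qj) := by rw [mul_assoc]
      _ = 0 := by rw [hAQ, zero_mul]
    have : A j (T (Qj v)) = 0 := by
      show (A j * (T * Qj)) v = 0
      rw [hz]
      rfl
    rwa [hQv] at this
  -- extended family
  set E' : ℕ → H →L[ℂ] H := fun i => if h : i < n then E ⟨i, h⟩ else 0 with hE'
  have hE'lt : ∀ (i : ℕ) (h : i < n), E' i = E ⟨i, h⟩ := by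
    intro i h; simp [hE', h]
  have hE'fin : ∀ i : Fin n, E' i.val = E i := by
    intro i; rw [hE'lt i.val i.isLt]
  have hE'sa : ∀ i, IsSelfAdjoint (E' i) := by
    intro i
    by_cases h : i < n
    · rw [hE'lt i h]; exact hEsa _
    · simp only [hE', dif_neg h]; exact .zero _
  have hE'id : ∀ i, IsIdempotentElem (E' i) := by
    intro i
    by_cases h : i < n
    · rw [hE'lt i h]; exact hEid _
    · simp only [hE', dif_neg h]; exact IsIdempotentElem.zero
  have hE'com : ∀ i j, Commute (E' i) (E' j) := by
    intro i j
    by_cases hi : i < n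
    · by_cases hj : j < n
      · rw [hE'lt i hi, hE'lt j hj]
        exact hcomm _ (hEL _) _ (hEL _)
      · simp only [hE', dif_neg hj]; exact Commute.zero_right _
    · simp only [hE', dif_neg hi]; exact Commute.zero_left _
  set g : H →L[ℂ] H := joinSeq E' n with hgdef
  have hgid : IsIdempotentElem g := joinSeq_idem E' hE'com hE'id n
  have hgsa : IsSelfAdjoint g := joinSeq_sa E' hE'com hE'sa n
  have hgOP : IsOrthoProj g := ⟨hgsa, hgid⟩
  -- the lattice join S of the E i
  obtain ⟨S, hSL, hSproj, hSub, hSmin⟩ := hL.2.2.2 (Set.range E)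
    (by rintro _ ⟨i, rfl⟩; exact hEL i)
  have hSE : ∀ i, S * E i = E i := fun i => hSub (E i) ⟨i, rfl⟩
  have hPS : S * P = P := hP.2.2 S hSL (by
    rintro _ ⟨i, rfl⟩
    show S * A i = A i
    calc S * A i = S * (E i * A i) := by rw [hEA]
    _ = (S * E i) * A i := by rw [mul_assoc]
    _ = E i * A i := by rw [hSE]
    _ = A i := hEA i)
  have hSg : g * S = S := hSmin g hgOP (by
    rintro _ ⟨i, rfl⟩
    show g * E i = E i
    rw [← hE'fin i]
    exact joinSeq_ge E' hE'com hE'id n i.val i.isLt)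
  have hPg : g * P = P := by
    rw [← hPS, ← mul_assoc, hSg]
  have decomp : ∀ y : H, P y = y →
      ∃ v : ℕ → H, (∀ i, E' i (v i) = v i) ∧ y = ∑ i ∈ Finset.range n, v i := by
    intro y hy
    apply joinSeq_mem E' hE'com hE'id n y
    calc g y = g (P y) := by rw [hy]
    _ = (g * P) y := rfl
    _ = P y := by rw [hPg]
    _ = y := hy
  have hone : InAlg L (1 : H →L[ℂ] H) := by
    intro F hF
    show F * (1 * F) = 1 * F
    rw [one_mul]
    exact hFid F hF
  have hxM : x ∈ {y | ∃ T : H →L[ℂ] H, InAlg L T ∧ T x = y} := ⟨1, hone, rfl⟩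
  have hxP : P x = x := by
    have : x ∈ closure {y | ∃ T : H →L[ℂ] H, InAlg L T ∧ T x = y} := subset_closure hxM
    rw [hclos] at this
    exact this
  -- independence consequences
  have hindAE' : ∀ (j : Fin n) (i : ℕ), i < n → i ≠ (j : ℕ) → A j * E' i = 0 := by
    intro j i hi hne
    rw [hE'lt i hi]
    exact hind j ⟨i, hi⟩ (by simp [Fin.ext_iff]; omega)
  -- Part 1
  have part1 : ∀ j, A j x ≠ 0 := by
    intro j h0
    obtain ⟨v, hv, hxsum⟩ := decomp x hxP
    have hAvi : ∀ i ∈ Finset.range n, i ≠ (j : ℕ) → A j (v i) = 0 := by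
      intro i hi hne
      have hi' : i < n := Finset.mem_range.mp hi
      have h1 : A j * E' i = 0 := hindAE' j i hi' hne
      calc A j (v i) = A j (E' i (v i)) := by rw [hv i]
      _ = (A j * E' i) (v i) := rfl
      _ = 0 := by rw [h1]; rfl
    have hAvj : A j (v (j : ℕ)) = 0 := by
      have hsum : ∑ i ∈ Finset.range n, A j (v i) = A j (v (j : ℕ)) :=
        Finset.sum_eq_single_of_mem (j : ℕ) (Finset.mem_range.mpr j.isLt)
          (fun i hi hne => hAvi i hi hne)
      have : A j x = ∑ i ∈ Finset.range n, A j (v i) := by rw [hxsum, map_sum]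
      rw [h0] at this
      rw [hsum] at this
      exact this.symm
    have hEvj : E j (v (j : ℕ)) = v (j : ℕ) := by
      have := hv (j : ℕ)
      rwa [hE'fin j] at this
    have hM0 : ∀ T, InAlg L T → A j (T x) = 0 := by
      intro T hT
      have hexp : A j (T x) = ∑ i ∈ Finset.range n, A j (T (v i)) := by
        rw [hxsum, map_sum, map_sum]
      rw [hexp]
      apply Finset.sum_eq_zero
      intro i hi
      have hi' : i < n := Finset.mem_range.mp hi
      by_cases hij : i = (j : ℕ)
      · subst hij
        exact (hAfacts j).2.2.1 T hT (v (j : ℕ)) hEvj hAvj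
      · have hEiL : E' i ∈ L := by rw [hE'lt i hi']; exact hEL _
        have halg : E' i * (T * E' i) = T * E' i := hT (E' i) hEiL
        have h1 : A j * (T * E' i) = 0 := by
          calc A j * (T * E' i) = A j * (E' i * (T * E' i)) := by rw [halg]
          _ = (A j * E' i) * (T * E' i) := by rw [mul_assoc]
          _ = 0 := by rw [hindAE' j i hi' hij, zero_mul]
        calc A j (T (v i)) = A j (T (E' i (v i))) := by rw [hv i]
        _ = (A j * (T * E' i)) (v i) := rfl
        _ = 0 := by rw [h1]; rfl
    obtain ⟨u, hu⟩ : ∃ u, A j u ≠ 0 := by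
      by_contra hcon
      push_neg at hcon
      exact (hA j).1 (ContinuousLinearMap.ext fun u => by simpa using hcon u)
    have hPz : P (A j u) = A j u := by
      calc P (A j u) = (P * A j) u := rfl
      _ = A j u := by rw [hAP]
    have hzM : A j u ∈ closure {y | ∃ T : H →L[ℂ] H, InAlg L T ∧ T x = y} := by
      rw [hclos]; exact hPz
    have hz0 : A j (A j u) = 0 := by
      have hMsub : {y | ∃ T : H →L[ℂ] H, InAlg L T ∧ T x = y} ⊆ {y | A j y = 0} := by
        rintro _ ⟨T, hT, rfl⟩
        exact hM0 T hT
      have hcl : IsClosed {y : H | A j y = 0} :=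
        isClosed_eq (A j).continuous continuous_const
      exact closure_minimal hMsub hcl hzM
    have : A j (A j u) = A j u := by
      calc A j (A j u) = (A j * A j) u := rfl
      _ = A j u := by rw [(hAfacts j).2.1]
    rw [this] at hz0
    exact hu hz0
  -- Part 2
  have part2 : ∀ j, ∀ w : H, E j w = w → ∃ T : H →L[ℂ] H, InAlg L T ∧ T x = w := by
    intro j w hw
    have hz0 : A j x ≠ 0 := part1 j
    have hc : ⟪A j x, A j x⟫ ≠ 0 :=
      fun hh => hz0 (inner_self_eq_zero.mp hh)
    have hAsa := (hAfacts j).1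
    have hAadj : ContinuousLinearMap.adjoint (A j) = A j :=
      ContinuousLinearMap.isSelfAdjoint_iff'.mp hAsa
    refine ⟨(⟪A j x, A j x⟫)⁻¹ • (innerSL ℂ (A j x)).smulRight w, ?_, ?_⟩
    · intro F hF
      have hFsaF := hFsa F hF
      have hFadj : ContinuousLinearMap.adjoint F = F :=
        ContinuousLinearMap.isSelfAdjoint_iff'.mp hFsaF
      have hflip : ∀ b : H, ⟪A j x, F b⟫ = ⟪F (A j x), b⟫ := by
        intro b
        rw [← hFadj]
        rw [ContinuousLinearMap.adjoint_inner_left]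
        rw [hFadj]
      rcases (hAfacts j).2.2.2 F hF with h | h
      · have hFA : F * A j = 0 := by
          have h2 := congrArg star h
          rwa [star_mul, hFsaF.star_eq, hAsa.star_eq, star_zero] at h2
        have hFz : F (A j x) = 0 := by
          calc F (A j x) = (F * A j) x := rfl
          _ = 0 := by rw [hFA]; rfl
        have hTF : ((⟪A j x, A j x⟫)⁻¹ • (innerSL ℂ (A j x)).smulRight w).comp F = 0 := by
          ext u
          simp only [ContinuousLinearMap.coe_comp', Function.comp_apply,
            ContinuousLinearMap.smul_apply, ContinuousLinearMap.smulRight_apply,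
            innerSL_apply_apply, ContinuousLinearMap.zero_apply]
          rw [hflip u, hFz, inner_zero_left, zero_smul, smul_zero]
        rw [hTF, ContinuousLinearMap.comp_zero]
      · have hFA : F * A j = A j := by
          have h2 := congrArg star h
          rwa [star_mul, hFsaF.star_eq, hAsa.star_eq] at h2
        have hEF : F * E j = E j := (hE j).2.2 F hF (by
          intro B hB
          rw [Set.mem_singleton_iff] at hB
          subst hB
          exact hFA)
        have hFw : F w = w := by
          calc F w = F (E j w) := by rw [hw]
          _ = (F * E j) w := rfl
          _ = E j w := by rw [hEF]
          _ = w := hw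
        ext u
        simp only [ContinuousLinearMap.coe_comp', Function.comp_apply,
          ContinuousLinearMap.smul_apply, ContinuousLinearMap.smulRight_apply,
          innerSL_apply_apply]
        rw [map_smul, map_smul, hFw]
    · have hzz : ⟪A j x, x⟫ = ⟪A j x, A j x⟫ := by
        have hAz : A j (A j x) = A j x := by
          calc A j (A j x) = (A j * A j) x := rfl
          _ = A j x := by rw [(hAfacts j).2.1]
        conv_lhs => rw [← hAz]
        rw [← hAadj, ContinuousLinearMap.adjoint_inner_left, hAadj]
      simp only [ContinuousLinearMap.smul_apply, ContinuousLinearMap.smulRight_apply,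
        innerSL_apply_apply]
      rw [hzz, smul_smul, inv_mul_cancel₀ hc, one_smul]
  -- Part 3 and 4
  have hMP : {y | ∃ T : H →L[ℂ] H, InAlg L T ∧ T x = y} = {y | P y = y} := by
    apply Set.Subset.antisymm
    · rw [← hclos]
      exact subset_closure
    · intro y hy
      obtain ⟨v, hv, hysum⟩ := decomp y hy
      have hch : ∀ i : ℕ, ∃ T : H →L[ℂ] H, InAlg L T ∧ T x = v i := by
        intro i
        by_cases h : i < n
        · refine part2 ⟨i, h⟩ (v i) ?_
          have := hv i
          rwa [hE'lt i h] at this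
        · have : v i = 0 := by
            have := hv i
            simp only [hE', dif_neg h] at this
            simpa using this.symm
          exact ⟨0, stmt9_inalg_zero L, by simp [this]⟩
      choose T' hT'a hT'x using hch
      refine ⟨∑ i ∈ Finset.range n, T' i, ?_, ?_⟩
      · refine Finset.sum_induction T' (InAlg L)
          (fun a b ha hb => stmt9_inalg_add L ha hb) (stmt9_inalg_zero L)
          (fun i _ => hT'a i)
      · rw [ContinuousLinearMap.sum_apply]
        rw [Finset.sum_congr rfl (fun i _ => hT'x i)]
        exact hysum.symm
  refine ⟨part1, part2, ?_, hMP⟩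
  rw [hMP]
  exact isClosed_eq P.continuous continuous_id
end
end

section
/- Let L be a commutative subspace lattice with Alg L its algebra of invariant operators. Suppose P_1 and P_2 are closed subspaces which are closures of singly generated invariant manifolds: P_1 = M_{x_1} and P_2 = M_{x_2} (both orbits closed). Then with x = x_1 + P_1^⊥ x_2, one has M_x = P_1 ∨ P_2; in particular the join of two closed singly generated invariant manifolds is again a closed singly generated invariant manifold. -/
noncomputable section

variable {H : Type*} [NormedAddCommGroup H] [InnerProductSpace ℂ H] [CompleteSpace H]

open scoped InnerProductSpace

set_option linter.unusedSectionVars false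

lemma inAlg_iff {L : Set (H →L[ℂ] H)} {T : H →L[ℂ] H} :
    InAlg L T ↔ ∀ P ∈ L, ∀ y, P (T (P y)) = T (P y) := by
  unfold InAlg
  refine forall₂_congr fun P hP => ?_
  rw [ContinuousLinearMap.ext_iff]
  simp [ContinuousLinearMap.comp_apply]

lemma inAlg_comp {L : Set (H →L[ℂ] H)} {S T : H →L[ℂ] H}
    (hS : InAlg L S) (hT : InAlg L T) : InAlg L (S.comp T) := by
  rw [inAlg_iff] at *
  intro P hP y
  simp only [ContinuousLinearMap.comp_apply]
  rw [← hT P hP y, hS P hP, hT P hP]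

lemma inAlg_add {L : Set (H →L[ℂ] H)} {S T : H →L[ℂ] H}
    (hS : InAlg L S) (hT : InAlg L T) : InAlg L (S + T) := by
  rw [inAlg_iff] at *
  intro P hP y
  simp only [ContinuousLinearMap.add_apply, map_add, hS P hP, hT P hP]

lemma inAlg_sub {L : Set (H →L[ℂ] H)} {S T : H →L[ℂ] H}
    (hS : InAlg L S) (hT : InAlg L T) : InAlg L (S - T) := by
  rw [inAlg_iff] at *
  intro P hP y
  simp only [ContinuousLinearMap.sub_apply, map_sub, hS P hP, hT P hP]

lemma inAlg_one {L : Set (H →L[ℂ] H)} (hL : ∀ P ∈ L, IsOrthoProj P) :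
    InAlg L (1 : H →L[ℂ] H) := by
  rw [inAlg_iff]
  intro P hP y
  have := congrFun (congrArg DFunLike.coe (hL P hP).2) y
  simpa [ContinuousLinearMap.comp_apply] using this

lemma selfadj_maps_orth (K : Submodule ℂ H) {Q : H →L[ℂ] H} (hQ : IsSelfAdjoint Q)
    (h1 : ∀ y ∈ K, Q y ∈ K) : ∀ y ∈ Kᗮ, Q y ∈ Kᗮ := by
  intro y hy
  rw [Submodule.mem_orthogonal]
  intro u hu
  calc ⟪u, Q y⟫_ℂ = ⟪Q u, y⟫_ℂ := by
        conv_lhs => rw [← hQ.adjoint_eq]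
        exact ContinuousLinearMap.adjoint_inner_right Q u y
    _ = 0 := (Submodule.mem_orthogonal K y).mp hy _ (h1 u hu)

lemma proj_comm (K : Submodule ℂ H) [K.HasOrthogonalProjection] {Q : H →L[ℂ] H}
    (h1 : ∀ y ∈ K, Q y ∈ K) (h2 : ∀ y ∈ Kᗮ, Q y ∈ Kᗮ) (v : H) :
    (Submodule.orthogonalProjectionOnto K (Q v) : H) = Q (Submodule.orthogonalProjectionOnto K v) := by
  have hdec : Q v = Q (Submodule.orthogonalProjectionOnto K v) + Q (v - Submodule.orthogonalProjectionOnto K v) := by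
    rw [← map_add]; congr 1; abel
  rw [hdec, map_add, Submodule.coe_add]
  rw [show (Submodule.orthogonalProjectionOnto K (Q (Submodule.orthogonalProjectionOnto K v)) : H) = _ from
      Submodule.starProjection_eq_self_iff.mpr (h1 _ (Submodule.orthogonalProjectionOnto K v).2),
    Submodule.orthogonalProjectionOnto_apply_of_mem_orthogonal
      (h2 _ (show v - (Submodule.orthogonalProjectionOnto K v : H) ∈ Kᗮ from Submodule.sub_starProjection_mem_orthogonal v))]
  simp

/-- If the orbits of `x₁` and `x₂` under `Alg L` are the closed subspaces `K₁`
and `K₂`, and `x₂'` is the component of `x₂` orthogonal to `K₁` (so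
`x₂' = P₁^⊥ x₂`), then the orbit of `x = x₁ + x₂'` is exactly the closed
subspace `K₁ ∨ K₂`. -/

theorem stmt10 (L : Set (H →L[ℂ] H)) (hL : ∀ P ∈ L, IsOrthoProj P)
    (hcomm : PairwiseCommuting L)
    (h0 : (0 : H →L[ℂ] H) ∈ L) (h1 : (1 : H →L[ℂ] H) ∈ L)
    (x1 x2 x2' : H) (K1 K2 : Submodule ℂ H)
    (hK1c : IsClosed (K1 : Set H)) (hK2c : IsClosed (K2 : Set H))
    (hM1 : {y | ∃ T : H →L[ℂ] H, InAlg L T ∧ T x1 = y} = (K1 : Set H))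
    (hM2 : {y | ∃ T : H →L[ℂ] H, InAlg L T ∧ T x2 = y} = (K2 : Set H))
    (hx2' : x2' ∈ K1ᗮ ∧ x2 - x2' ∈ K1) :
    {y | ∃ T : H →L[ℂ] H, InAlg L T ∧ T (x1 + x2') = y} =
      ((K1 ⊔ K2).topologicalClosure : Set H) := by
  haveI : CompleteSpace K1 := hK1c.completeSpace_coe
  haveI : CompleteSpace K2 := hK2c.completeSpace_coe
  set P1 : H →L[ℂ] H := K1.subtypeL.comp (Submodule.orthogonalProjectionOnto K1) with hP1def
  set P2 : H →L[ℂ] H := K2.subtypeL.comp (Submodule.orthogonalProjectionOnto K2) with hP2def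
  have hP1apply : ∀ v, P1 v = (Submodule.orthogonalProjectionOnto K1 v : H) := fun v => rfl
  have hP2apply : ∀ v, P2 v = (Submodule.orthogonalProjectionOnto K2 v : H) := fun v => rfl
  have hP1K : ∀ v, P1 v ∈ K1 := fun v => (Submodule.orthogonalProjectionOnto K1 v).2
  have hP2K : ∀ v, P2 v ∈ K2 := fun v => (Submodule.orthogonalProjectionOnto K2 v).2
  have hP1id : ∀ v ∈ K1, P1 v = v := fun v hv => Submodule.starProjection_eq_self_iff.mpr hv
  have hP2id : ∀ v ∈ K2, P2 v = v := fun v hv => Submodule.starProjection_eq_self_iff.mpr hv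
  have hP1orth : ∀ v ∈ K1ᗮ, P1 v = 0 := by
    intro v hv
    rw [hP1apply, Submodule.orthogonalProjectionOnto_apply_of_mem_orthogonal hv,
      Submodule.coe_zero]
  have hidem : ∀ P ∈ L, ∀ y, P (P y) = P y := by
    intro P hP y
    have := congrFun (congrArg DFunLike.coe (hL P hP).2) y
    simpa using this
  have h1alg : InAlg L (1 : H →L[ℂ] H) := inAlg_one hL
  have hx1K : x1 ∈ K1 := by
    have h : x1 ∈ ({y | ∃ T : H →L[ℂ] H, InAlg L T ∧ T x1 = y} : Set H) := ⟨1, h1alg, rfl⟩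
    rw [hM1] at h; exact h
  have hK1inv : ∀ T, InAlg L T → ∀ y ∈ K1, T y ∈ K1 := by
    intro T hT y hy
    have hy' : y ∈ ({y | ∃ T : H →L[ℂ] H, InAlg L T ∧ T x1 = y} : Set H) := by
      rw [hM1]; exact hy
    obtain ⟨S, hS, rfl⟩ := hy'
    have h : T (S x1) ∈ ({y | ∃ T : H →L[ℂ] H, InAlg L T ∧ T x1 = y} : Set H) :=
      ⟨T.comp S, inAlg_comp hT hS, rfl⟩
    rw [hM1] at h; exact h
  have hK2inv : ∀ T, InAlg L T → ∀ y ∈ K2, T y ∈ K2 := by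
    intro T hT y hy
    have hy' : y ∈ ({y | ∃ T : H →L[ℂ] H, InAlg L T ∧ T x2 = y} : Set H) := by
      rw [hM2]; exact hy
    obtain ⟨S, hS, rfl⟩ := hy'
    have h : T (S x2) ∈ ({y | ∃ T : H →L[ℂ] H, InAlg L T ∧ T x2 = y} : Set H) :=
      ⟨T.comp S, inAlg_comp hT hS, rfl⟩
    rw [hM2] at h; exact h
  have hLalg : ∀ P ∈ L, InAlg L P := by
    intro P hP
    rw [inAlg_iff]
    intro Q hQ y
    have hc : P (Q y) = Q (P y) := congrFun (congrArg DFunLike.coe (hcomm P hP Q hQ)) y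
    rw [hc, hidem Q hQ, ← hc]
  have hcommP1 : ∀ Q ∈ L, ∀ v, P1 (Q v) = Q (P1 v) := by
    intro Q hQ v
    exact proj_comm K1 (hK1inv Q (hLalg Q hQ))
      (selfadj_maps_orth K1 (hL Q hQ).1 (hK1inv Q (hLalg Q hQ))) v
  have hP1alg : InAlg L P1 := by
    rw [inAlg_iff]
    intro Q hQ y
    rw [hcommP1 Q hQ, hidem Q hQ, ← hcommP1 Q hQ]
  have hcommP2 : ∀ Q ∈ L, ∀ v, P2 (Q v) = Q (P2 v) := by
    intro Q hQ v
    exact proj_comm K2 (hK2inv Q (hLalg Q hQ))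
      (selfadj_maps_orth K2 (hL Q hQ).1 (hK2inv Q (hLalg Q hQ))) v
  have hP2alg : InAlg L P2 := by
    rw [inAlg_iff]
    intro Q hQ y
    rw [hcommP2 Q hQ, hidem Q hQ, ← hcommP2 Q hQ]
  have hPpalg : InAlg L (1 - P1) := inAlg_sub h1alg hP1alg
  -- the "F z = z" characterization of K1 ⊔ K2
  set G : H →L[ℂ] H := P1 + P2 - P1.comp P2 - 1 with hGdef
  have hGapply : ∀ z, G z = P1 z + P2 z - P1 (P2 z) - z := by
    intro z
    simp [hGdef, ContinuousLinearMap.sub_apply, ContinuousLinearMap.add_apply,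
      ContinuousLinearMap.comp_apply]
  have hker : (K1 ⊔ K2) = LinearMap.ker (G : H →ₗ[ℂ] H) := by
    apply le_antisymm
    · apply sup_le
      · intro z hz
        rw [LinearMap.mem_ker, ContinuousLinearMap.coe_coe, hGapply, hP1id z hz, hP1id _ (hK1inv P2 hP2alg z hz)]
        abel
      · intro z hz
        rw [LinearMap.mem_ker, ContinuousLinearMap.coe_coe, hGapply, hP2id z hz]
        abel
    · intro z hz
      rw [LinearMap.mem_ker, ContinuousLinearMap.coe_coe, hGapply] at hz
      have hzz : P1 z + P2 z - P1 (P2 z) = z := sub_eq_zero.mp hz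
      have hz' : (P1 z - P1 (P2 z)) + P2 z = z := by
        conv_rhs => rw [← hzz]
        abel
      rw [← hz']
      exact Submodule.add_mem _
        (Submodule.mem_sup_left (Submodule.sub_mem _ (hP1K z) (hP1K (P2 z))))
        (Submodule.mem_sup_right (hP2K z))
  have hclosed : IsClosed ((K1 ⊔ K2 : Submodule ℂ H) : Set H) := by
    rw [hker]
    exact ContinuousLinearMap.isClosed_ker G
  have hRHS : (((K1 ⊔ K2).topologicalClosure : Submodule ℂ H) : Set H)
      = ((K1 ⊔ K2 : Submodule ℂ H) : Set H) := by
    rw [Submodule.topologicalClosure_coe, hclosed.closure_eq]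
  rw [hRHS]
  ext z
  constructor
  · rintro ⟨T, hT, rfl⟩
    rw [map_add]
    have h1 : T x1 ∈ K1 := hK1inv T hT x1 hx1K
    have hx2K : x2 ∈ K2 := by
      have h : x2 ∈ ({y | ∃ T : H →L[ℂ] H, InAlg L T ∧ T x2 = y} : Set H) := ⟨1, h1alg, rfl⟩
      rw [hM2] at h; exact h
    have ha : T x2 ∈ K2 := hK2inv T hT x2 hx2K
    have hb : T (x2 - x2') ∈ K1 := hK1inv T hT _ hx2'.2
    have hx2'eq : T x2' = T x2 - T (x2 - x2') := by rw [← map_sub]; congr 1; abel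
    refine Submodule.add_mem _ (Submodule.mem_sup_left h1) ?_
    rw [hx2'eq]
    exact Submodule.sub_mem _ (Submodule.mem_sup_right ha) (Submodule.mem_sup_left hb)
  · intro hz
    have hzm : z ∈ K1 ⊔ K2 := hz
    rw [hker] at hzm
    have hzker : P1 z + P2 z - P1 (P2 z) - z = 0 := by
      rw [← hGapply]; exact LinearMap.mem_ker.mp hzm
    have hz' : P1 z + P2 z - P1 (P2 z) = z := sub_eq_zero.mp hzker
    obtain ⟨T1, hT1, hT1x⟩ : ∃ T : H →L[ℂ] H, InAlg L T ∧ T x1 = P1 z := by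
      have : P1 z ∈ ({y | ∃ T : H →L[ℂ] H, InAlg L T ∧ T x1 = y} : Set H) := by
        rw [hM1]; exact hP1K z
      exact this
    obtain ⟨T2, hT2, hT2x⟩ : ∃ T : H →L[ℂ] H, InAlg L T ∧ T x2 = P2 z := by
      have : P2 z ∈ ({y | ∃ T : H →L[ℂ] H, InAlg L T ∧ T x2 = y} : Set H) := by
        rw [hM2]; exact hP2K z
      exact this
    refine ⟨T1.comp P1 + ((1 - P1).comp T2).comp (1 - P1),
      inAlg_add (inAlg_comp hT1 hP1alg) (inAlg_comp (inAlg_comp hPpalg hT2) hPpalg), ?_⟩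
    have hP1x : P1 (x1 + x2') = x1 := by
      rw [map_add, hP1id x1 hx1K, hP1orth x2' hx2'.1, add_zero]
    have hT2x2' : T2 x2' = T2 x2 - T2 (x2 - x2') := by rw [← map_sub]; congr 1; abel
    have hT2b : P1 (T2 (x2 - x2')) = T2 (x2 - x2') := hP1id _ (hK1inv T2 hT2 _ hx2'.2)
    simp only [ContinuousLinearMap.add_apply, ContinuousLinearMap.comp_apply,
      ContinuousLinearMap.sub_apply, ContinuousLinearMap.one_apply]
    rw [hP1x]
    have harg : x1 + x2' - x1 = x2' := by abel
    have hPT : P1 (T2 x2') = P1 (T2 x2) - T2 (x2 - x2') := by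
      rw [hT2x2', map_sub, hT2b]
    rw [harg, hT1x, hPT, hT2x2', hT2x]
    conv_rhs => rw [← hz']
    abel

end
end

section
/- Let e_n = n(n+1)/2, and define a_n = 2^{-e_n} if n is odd, 0 if n is even; b_n = 2^{-e_n} if n is even, 0 if n is odd. Then for every odd k, (Σ_{n≥k} a_n)·(Σ_{n≥k} b_n)^{-1} > 2^k, and for every even k, (Σ_{n≥k} b_n)·(Σ_{n≥k} a_n)^{-1} > 2^k. Consequently sup_k (Σ_{n≥k} a_n)/(Σ_{n≥k} b_n) = ∞ and sup_k (Σ_{n≥k} b_n)/(Σ_{n≥k} a_n) = ∞. -/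
noncomputable section

/-- The triangular numbers `e n = n(n+1)/2`. -/
def eT (n : ℕ) : ℕ := n * (n + 1) / 2

/-- `a n = 2^{-e n}` for odd `n`, `0` for even `n`. -/
def aSeq (n : ℕ) : ℝ := if Odd n then ((2 : ℝ) ^ eT n)⁻¹ else 0

/-- `b n = 2^{-e n}` for even `n ≥ 1`, `0` for odd `n` (the sequences start at `n = 1`). -/
def bSeq (n : ℕ) : ℝ := if n ≠ 0 ∧ Even n then ((2 : ℝ) ^ eT n)⁻¹ else 0

lemma two_eT (n : ℕ) : 2 * eT n = n * (n + 1) :=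
  Nat.mul_div_cancel' (even_iff_two_dvd.mp (Nat.even_mul_succ_self n)) -- even → 2 ∣

lemma eT_succ (n : ℕ) : eT (n + 1) = eT n + (n + 1) := by
  have h1 := two_eT n
  have h2 := two_eT (n + 1)
  nlinarith

lemma eT_add_le (m n : ℕ) : eT m + n ≤ eT (m + n) := by
  induction n with
  | zero => simp
  | succ n ih =>
      have h := eT_succ (m + n)
      have heq : eT (m + (n + 1)) = eT (m + n + 1) := rfl
      omega

lemma le_eT (n : ℕ) : n ≤ eT n := by
  simpa [eT] using eT_add_le 0 n

lemma summable_pow_inv : Summable (fun n : ℕ => ((2 : ℝ) ^ eT n)⁻¹) := by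
  apply Summable.of_nonneg_of_le (fun n => by positivity) (fun n => ?_)
    (summable_geometric_of_lt_one (by norm_num) (by norm_num : (1/2 : ℝ) < 1))
  have h : ((2 : ℝ) ^ eT n)⁻¹ = (1/2 : ℝ) ^ (eT n) := by
    rw [one_div, inv_pow]
  rw [h]
  exact pow_le_pow_of_le_one (by norm_num) (by norm_num) (le_eT n)

lemma aSeq_nonneg (n : ℕ) : 0 ≤ aSeq n := by
  unfold aSeq; split <;> positivity

lemma bSeq_nonneg (n : ℕ) : 0 ≤ bSeq n := by
  unfold bSeq; split <;> positivity

lemma aSeq_le (n : ℕ) : aSeq n ≤ ((2 : ℝ) ^ eT n)⁻¹ := by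
  unfold aSeq; split
  · exact le_refl _
  · positivity

lemma bSeq_le (n : ℕ) : bSeq n ≤ ((2 : ℝ) ^ eT n)⁻¹ := by
  unfold bSeq; split
  · exact le_refl _
  · positivity

/-- Generic summability of truncated sequences dominated by `2^{-e n}`. -/
lemma summable_ite {f : ℕ → ℝ} (h0 : ∀ n, 0 ≤ f n)
    (h1 : ∀ n, f n ≤ ((2 : ℝ) ^ eT n)⁻¹) (k : ℕ) :
    Summable (fun n => if k ≤ n then f n else 0) := by
  apply Summable.of_nonneg_of_le (fun n => ?_) (fun n => ?_) summable_pow_inv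
  · split
    · exact h0 n
    · exact le_refl _
  · split
    · exact h1 n
    · positivity

/-- The tail of the full geometric-type series. -/
lemma tail_bound (m : ℕ) :
    (∑' n : ℕ, if m ≤ n then ((2 : ℝ) ^ eT n)⁻¹ else 0) ≤ 2 * ((2 : ℝ) ^ eT m)⁻¹ := by
  set g : ℕ → ℝ := fun n => if m ≤ n then ((2 : ℝ) ^ eT n)⁻¹ else 0 with hg
  have hsum : Summable g := summable_ite (fun n => by positivity) (fun n => le_refl _) m
  have hshift := Summable.sum_add_tsum_nat_add (f := g) m hsum
  have h0 : (∑ i ∈ Finset.range m, g i) = 0 := by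
    apply Finset.sum_eq_zero
    intro i hi
    have : ¬ m ≤ i := by
      have := Finset.mem_range.mp hi; omega
    simp [hg, this]
  have htail : (∑' n : ℕ, g n) = ∑' i : ℕ, ((2 : ℝ) ^ eT (i + m))⁻¹ := by
    rw [← hshift, h0, zero_add]
    apply tsum_congr
    intro i
    simp [hg, Nat.le_add_left]
  rw [htail]
  have hle : ∀ i : ℕ, ((2 : ℝ) ^ eT (i + m))⁻¹ ≤ ((2 : ℝ) ^ eT m)⁻¹ * (1/2 : ℝ) ^ i := by
    intro i
    have h1 : eT m + i ≤ eT (i + m) := by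
      rw [Nat.add_comm i m]; exact eT_add_le m i
    have h2 : ((2 : ℝ) ^ eT (i + m))⁻¹ ≤ ((2 : ℝ) ^ (eT m + i))⁻¹ := by
      apply inv_anti₀ (by positivity)
      exact pow_le_pow_right₀ (by norm_num) h1
    calc ((2 : ℝ) ^ eT (i + m))⁻¹ ≤ ((2 : ℝ) ^ (eT m + i))⁻¹ := h2
    _ = ((2 : ℝ) ^ eT m)⁻¹ * (1/2 : ℝ) ^ i := by
        rw [pow_add, mul_inv]
        congr 1
        rw [one_div, inv_pow]
  have hsum2 : Summable (fun i : ℕ => ((2 : ℝ) ^ eT m)⁻¹ * (1/2 : ℝ) ^ i) :=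
    (summable_geometric_of_lt_one (by norm_num) (by norm_num : (1/2 : ℝ) < 1)).mul_left _
  have hsum1 : Summable (fun i : ℕ => ((2 : ℝ) ^ eT (i + m))⁻¹) := by
    apply Summable.of_nonneg_of_le (fun i => by positivity) hle hsum2
  calc (∑' i : ℕ, ((2 : ℝ) ^ eT (i + m))⁻¹)
      ≤ ∑' i : ℕ, ((2 : ℝ) ^ eT m)⁻¹ * (1/2 : ℝ) ^ i := Summable.tsum_le_tsum hle hsum1 hsum2
    _ = ((2 : ℝ) ^ eT m)⁻¹ * ∑' i : ℕ, (1/2 : ℝ) ^ i := tsum_mul_left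
    _ = ((2 : ℝ) ^ eT m)⁻¹ * 2 := by
        rw [tsum_geometric_of_lt_one (by norm_num) (by norm_num : (1/2 : ℝ) < 1)]
        norm_num
    _ = 2 * ((2 : ℝ) ^ eT m)⁻¹ := by ring

/-- Tail of a sequence dominated by `2^{-e n}` which vanishes at `k`. -/
lemma tail_small {f : ℕ → ℝ} (h0 : ∀ n, 0 ≤ f n)
    (h1 : ∀ n, f n ≤ ((2 : ℝ) ^ eT n)⁻¹) (k : ℕ) (hk : f k = 0) :
    (∑' n : ℕ, if k ≤ n then f n else 0) ≤ ((2 : ℝ) ^ (eT k + k))⁻¹ := by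
  have step : (∑' n : ℕ, if k ≤ n then f n else 0)
      ≤ ∑' n : ℕ, if k + 1 ≤ n then ((2 : ℝ) ^ eT n)⁻¹ else 0 := by
    apply Summable.tsum_le_tsum _ (summable_ite h0 h1 k)
      (summable_ite (fun n => by positivity) (fun n => le_refl _) (k+1))
    intro n
    by_cases h : k + 1 ≤ n
    · have : k ≤ n := by omega
      simp only [if_pos h, if_pos this]
      exact h1 n
    · by_cases h' : k ≤ n
      · have : n = k := by omega
        simp [h, h', this, hk]
      · simp [h, h']
  have := tail_bound (k + 1)
  have heq : 2 * ((2 : ℝ) ^ eT (k+1))⁻¹ = ((2 : ℝ) ^ (eT k + k))⁻¹ := by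
    rw [eT_succ]
    rw [show eT k + (k + 1) = (eT k + k) + 1 by omega, pow_succ]
    rw [mul_inv]
    ring
  linarith

/-- Tail lower bound via two nonzero terms. -/
lemma tail_big {f : ℕ → ℝ} (h0 : ∀ n, 0 ≤ f n)
    (h1 : ∀ n, f n ≤ ((2 : ℝ) ^ eT n)⁻¹) (k : ℕ)
    (hk : f k = ((2 : ℝ) ^ eT k)⁻¹) (hk2 : f (k+2) = ((2 : ℝ) ^ eT (k+2))⁻¹) :
    ((2 : ℝ) ^ eT k)⁻¹ < ∑' n : ℕ, if k ≤ n then f n else 0 := by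
  have hsum := summable_ite h0 h1 k
  have hle : (∑ n ∈ ({k, k+2} : Finset ℕ), if k ≤ n then f n else 0)
      ≤ ∑' n : ℕ, if k ≤ n then f n else 0 := by
    apply Summable.sum_le_tsum _ (fun n _ => ?_) hsum
    split
    · exact h0 n
    · exact le_refl _
  have hmem : k ∉ ({k+2} : Finset ℕ) := by simp
  rw [Finset.sum_insert hmem, Finset.sum_singleton] at hle
  simp only [le_refl, if_pos, show k ≤ k + 2 by omega] at hle
  have : (0 : ℝ) < ((2 : ℝ) ^ eT (k+2))⁻¹ := by positivity
  rw [hk, hk2] at hle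
  linarith

/-- Tail strict positivity via term at `k+1`. -/
lemma tail_pos {f : ℕ → ℝ} (h0 : ∀ n, 0 ≤ f n)
    (h1 : ∀ n, f n ≤ ((2 : ℝ) ^ eT n)⁻¹) (k : ℕ)
    (hk : f (k+1) = ((2 : ℝ) ^ eT (k+1))⁻¹) :
    0 < ∑' n : ℕ, if k ≤ n then f n else 0 := by
  have hsum := summable_ite h0 h1 k
  have hle : (if k ≤ k + 1 then f (k+1) else 0) ≤ ∑' n : ℕ, if k ≤ n then f n else 0 := by
    apply Summable.le_tsum hsum
    intro n _
    split
    · exact h0 n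
    · exact le_refl _
  rw [if_pos (show k ≤ k + 1 by omega), hk] at hle
  have : (0 : ℝ) < ((2 : ℝ) ^ eT (k+1))⁻¹ := by positivity
  linarith

lemma key_odd (k : ℕ) (hk : Odd k) :
    (∑' n : ℕ, if k ≤ n then aSeq n else 0) *
      (∑' n : ℕ, if k ≤ n then bSeq n else 0)⁻¹ > 2 ^ k := by
  have hB_pos : 0 < ∑' n : ℕ, if k ≤ n then bSeq n else 0 := by
    apply tail_pos bSeq_nonneg bSeq_le
    have he : Even (k + 1) := by
      rcases hk with ⟨m, hm⟩; exact ⟨m+1, by omega⟩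
    simp [bSeq, he]
  have hB_le : (∑' n : ℕ, if k ≤ n then bSeq n else 0) ≤ ((2 : ℝ) ^ (eT k + k))⁻¹ := by
    apply tail_small bSeq_nonneg bSeq_le
    have : ¬ Even k := Nat.not_even_iff_odd.mpr hk
    simp [bSeq, this]
  have hA_gt : ((2 : ℝ) ^ eT k)⁻¹ < ∑' n : ℕ, if k ≤ n then aSeq n else 0 := by
    apply tail_big aSeq_nonneg aSeq_le
    · simp [aSeq, hk]
    · have : Odd (k + 2) := by rcases hk with ⟨m, hm⟩; exact ⟨m+1, by omega⟩
      simp [aSeq, this]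
  rw [gt_iff_lt, ← div_eq_mul_inv, lt_div_iff₀ hB_pos]
  calc (2:ℝ) ^ k * (∑' n : ℕ, if k ≤ n then bSeq n else 0)
      ≤ (2:ℝ) ^ k * ((2 : ℝ) ^ (eT k + k))⁻¹ := by
        apply mul_le_mul_of_nonneg_left hB_le (by positivity)
    _ = ((2 : ℝ) ^ eT k)⁻¹ := by
        rw [pow_add, mul_inv]
        field_simp
    _ < _ := hA_gt

lemma key_even (k : ℕ) (h1k : 1 ≤ k) (hk : Even k) :
    (∑' n : ℕ, if k ≤ n then bSeq n else 0) *
      (∑' n : ℕ, if k ≤ n then aSeq n else 0)⁻¹ > 2 ^ k := by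
  have hA_pos : 0 < ∑' n : ℕ, if k ≤ n then aSeq n else 0 := by
    apply tail_pos aSeq_nonneg aSeq_le
    have ho : Odd (k + 1) := Even.add_one hk
    simp [aSeq, ho]
  have hA_le : (∑' n : ℕ, if k ≤ n then aSeq n else 0) ≤ ((2 : ℝ) ^ (eT k + k))⁻¹ := by
    apply tail_small aSeq_nonneg aSeq_le
    have : ¬ Odd k := Nat.not_odd_iff_even.mpr hk
    simp [aSeq, this]
  have hB_gt : ((2 : ℝ) ^ eT k)⁻¹ < ∑' n : ℕ, if k ≤ n then bSeq n else 0 := by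
    apply tail_big bSeq_nonneg bSeq_le
    · have : k ≠ 0 := by omega
      simp [bSeq, this, hk]
    · have h2 : Even (k + 2) := by rcases hk with ⟨m, hm⟩; exact ⟨m+1, by omega⟩
      have : k + 2 ≠ 0 := by omega
      simp [bSeq, this, h2]
  rw [gt_iff_lt, ← div_eq_mul_inv, lt_div_iff₀ hA_pos]
  calc (2:ℝ) ^ k * (∑' n : ℕ, if k ≤ n then aSeq n else 0)
      ≤ (2:ℝ) ^ k * ((2 : ℝ) ^ (eT k + k))⁻¹ := by
        apply mul_le_mul_of_nonneg_left hA_le (by positivity)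
    _ = ((2 : ℝ) ^ eT k)⁻¹ := by
        rw [pow_add, mul_inv]
        field_simp
    _ < _ := hB_gt

/-- For odd `k` the tail ratio `(Σ_{n≥k} a n)(Σ_{n≥k} b n)⁻¹` exceeds `2^k`, for
even `k ≥ 1` the tail ratio `(Σ_{n≥k} b n)(Σ_{n≥k} a n)⁻¹` exceeds `2^k`; hence
both ratio sequences are unbounded. -/
theorem stmt13 :
    (∀ k : ℕ, Odd k →
      (∑' n : ℕ, if k ≤ n then aSeq n else 0) *
        (∑' n : ℕ, if k ≤ n then bSeq n else 0)⁻¹ > 2 ^ k) ∧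
    (∀ k : ℕ, 1 ≤ k → Even k →
      (∑' n : ℕ, if k ≤ n then bSeq n else 0) *
        (∑' n : ℕ, if k ≤ n then aSeq n else 0)⁻¹ > 2 ^ k) ∧
    (∀ C : ℝ, ∃ k : ℕ,
      (∑' n : ℕ, if k ≤ n then aSeq n else 0) /
        (∑' n : ℕ, if k ≤ n then bSeq n else 0) > C) ∧
    (∀ C : ℝ, ∃ k : ℕ,
      (∑' n : ℕ, if k ≤ n then bSeq n else 0) /
        (∑' n : ℕ, if k ≤ n then aSeq n else 0) > C) := by
  refine ⟨key_odd, key_even, ?_, ?_⟩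
  · intro C
    obtain ⟨m, hm⟩ := exists_nat_gt C
    refine ⟨2*m+1, ?_⟩
    have h1 := key_odd (2*m+1) ⟨m, by ring⟩
    have h2 : (m : ℝ) < 2 ^ (2*m+1) := by
      calc (m : ℝ) < 2 ^ m := by exact_mod_cast Nat.lt_two_pow_self (n := m)
      _ ≤ 2 ^ (2*m+1) := by
          apply pow_le_pow_right₀ (by norm_num); omega
    rw [gt_iff_lt, div_eq_mul_inv]
    calc C < (m : ℝ) := hm
      _ < 2 ^ (2*m+1) := h2
      _ < _ := h1
  · intro C
    obtain ⟨m, hm⟩ := exists_nat_gt C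
    refine ⟨2*m+2, ?_⟩
    have h1 := key_even (2*m+2) (by omega) ⟨m+1, by ring⟩
    have h2 : (m : ℝ) < 2 ^ (2*m+2) := by
      calc (m : ℝ) < 2 ^ m := by exact_mod_cast Nat.lt_two_pow_self (n := m)
      _ ≤ 2 ^ (2*m+2) := by
          apply pow_le_pow_right₀ (by norm_num); omega
    rw [gt_iff_lt, div_eq_mul_inv]
    calc C < (m : ℝ) := hm
      _ < 2 ^ (2*m+2) := h2
      _ < _ := h1

end
end

section
/- Let L be a nest on a Hilbert space H that contains a strictly increasing sequence 0 = F_0 < F_1 < F_2 < .... Then there exist vectors x, y ∈ H such that no bounded operator T leaving every projection of L invariant satisfies T x = y, and no such operator satisfies T y = x. Hence the invariant linear manifolds M_x and M_y of Alg L satisfy M_x ⊄ M_y and M_y ⊄ M_x, so the invariant linear manifolds of Alg L are not totally ordered by inclusion. -/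
noncomputable section

variable {H : Type*} [NormedAddCommGroup H] [InnerProductSpace ℂ H] [CompleteSpace H]

namespace Stmt14Aux

local notation "⟪" x ", " y "⟫" => @inner ℂ _ _ x y

private lemma half_decay {g : ℕ → ℝ} (hh : ∀ j, g (j+1) ≤ g j / 2) :
    ∀ k i, g (k + i) ≤ g k * (1/2) ^ i := by
  intro k i
  induction i with
  | zero => simp
  | succ i ih =>
      have h1 : g (k + (i+1)) = g ((k + i) + 1) := by ring_nf
      rw [h1, pow_succ]
      calc g ((k+i)+1) ≤ g (k+i) / 2 := hh _
        _ ≤ (g k * (1/2)^i) / 2 := by linarith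
        _ = g k * ((1/2)^i * (1/2)) := by ring

private lemma summable_half {g : ℕ → ℝ} (hpos : ∀ j, 0 ≤ g j) (hh : ∀ j, g (j+1) ≤ g j / 2) :
    Summable g := by
  apply Summable.of_nonneg_of_le hpos (fun j => ?_)
    (((summable_geometric_of_lt_one (by norm_num) (by norm_num : (1:ℝ)/2 < 1))).mul_left (g 0))
  simpa using half_decay hh 0 j

private lemma tsum_tail_le {g : ℕ → ℝ} (hpos : ∀ j, 0 ≤ g j) (hh : ∀ j, g (j+1) ≤ g j / 2)
    (k : ℕ) : ∑' j, (if k ≤ j then g j else 0) ≤ 2 * g k := by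
  have hg : Summable g := summable_half hpos hh
  have hf : Summable (fun j => if k ≤ j then g j else 0) := by
    apply Summable.of_nonneg_of_le (fun j => by by_cases h : k ≤ j <;> simp [h, hpos j])
      (fun j => ?_) hg
    by_cases h : k ≤ j <;> simp [h, hpos j]
  have hsplit := Summable.sum_add_tsum_nat_add (f := fun j => if k ≤ j then g j else 0) k hf
  have hzero : (∑ i ∈ Finset.range k, (if k ≤ i then g i else 0)) = 0 := by
    apply Finset.sum_eq_zero
    intro i hi
    have : ¬ k ≤ i := by simpa using Finset.mem_range.mp hi
    simp [this]
  have hshift : (∑' i : ℕ, (if k ≤ i + k then g (i + k) else 0)) = ∑' i : ℕ, g (i + k) := by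
    apply tsum_congr; intro i; simp [Nat.le_add_left]
  have hsum_shift : Summable (fun i => g (i + k)) := (summable_nat_add_iff k).mpr hg
  have hbound : ∑' i : ℕ, g (i + k) ≤ ∑' i : ℕ, g k * (1/2)^i := by
    apply hsum_shift.tsum_le_tsum _ (((summable_geometric_of_lt_one (by norm_num)
      (by norm_num : (1:ℝ)/2 < 1))).mul_left (g k))
    intro i
    have := half_decay hh k i
    simpa [Nat.add_comm] using this
  have hgeom : ∑' i : ℕ, g k * (1/2)^i = 2 * g k := by
    rw [tsum_mul_left, tsum_geometric_of_lt_one (by norm_num) (by norm_num : (1:ℝ)/2 < 1)]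
    norm_num; ring
  calc ∑' j, (if k ≤ j then g j else 0)
      = (∑ i ∈ Finset.range k, (if k ≤ i then g i else 0)) + ∑' i : ℕ, (if k ≤ i + k then g (i+k) else 0) := hsplit.symm
    _ = ∑' i : ℕ, g (i + k) := by rw [hzero, hshift, zero_add]
    _ ≤ 2 * g k := hbound.trans_eq hgeom

private def sC (n : ℕ) : ℝ := (Real.sqrt 2)⁻¹ ^ (n * (n + 1) / 2)

private lemma sqrt2_pos : 0 < Real.sqrt 2 := Real.sqrt_pos.mpr (by norm_num)

private lemma one_lt_sqrt2 : 1 < Real.sqrt 2 := by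
  have := Real.sqrt_lt_sqrt (by norm_num : (0:ℝ) ≤ 1) (by norm_num : (1:ℝ) < 2)
  simpa using this

private lemma r_pos : 0 < (Real.sqrt 2)⁻¹ := inv_pos.mpr sqrt2_pos
private lemma r_lt_one : (Real.sqrt 2)⁻¹ < 1 := inv_lt_one_of_one_lt₀ one_lt_sqrt2

private lemma sC_pos (n : ℕ) : 0 < sC n := pow_pos r_pos _

private lemma sC_succ (n : ℕ) : sC (n + 1) = sC n * (Real.sqrt 2)⁻¹ ^ (n + 1) := by
  have h2 : (n+1) * (n+2) = n * (n+1) + (n+1) * 2 := by ring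
  show (Real.sqrt 2)⁻¹ ^ ((n+1) * (n + 1 + 1) / 2) = _
  rw [show n + 1 + 1 = n + 2 from rfl, h2, Nat.add_mul_div_right _ _ (by norm_num : 0 < 2),
    pow_add]
  rfl

private lemma sC_two_step (n : ℕ) : sC (n + 2) ≤ sC n / 2 := by
  have h1 : sC (n+2) = sC n * (Real.sqrt 2)⁻¹ ^ ((n+1) + (n+2)) := by
    rw [show n + 2 = (n + 1) + 1 from rfl, sC_succ (n+1), sC_succ n, pow_add]
    ring
  have h2 : (Real.sqrt 2)⁻¹ ^ ((n+1) + (n+2)) ≤ (Real.sqrt 2)⁻¹ ^ 2 :=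
    pow_le_pow_of_le_one r_pos.le r_lt_one.le (by omega)
  have h3 : (Real.sqrt 2)⁻¹ ^ 2 = 1/2 := by
    rw [sq, ← mul_inv]
    rw [Real.mul_self_sqrt (by norm_num : (0:ℝ) ≤ 2)]
    norm_num
  calc sC (n+2) = sC n * (Real.sqrt 2)⁻¹ ^ ((n+1)+(n+2)) := h1
    _ ≤ sC n * (1/2) := by
        apply mul_le_mul_of_nonneg_left (h2.trans_eq h3) (sC_pos n).le
    _ = sC n / 2 := by ring

private lemma sC_scale (n : ℕ) : sC n = sC (n + 1) * (Real.sqrt 2) ^ (n + 1) := by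
  rw [sC_succ n, mul_assoc, ← mul_pow, inv_mul_cancel₀ (ne_of_gt sqrt2_pos)]
  simp

private lemma sqrt2_even_pow (m : ℕ) : (Real.sqrt 2) ^ (2 * m) = 2 ^ m := by
  rw [pow_mul, Real.sq_sqrt (by norm_num : (0:ℝ) ≤ 2)]

end Stmt14Aux

local notation "⟪" x ", " y "⟫" => @inner ℂ _ _ x y

open Stmt14Aux in
/-- If a nest `L` contains a strictly increasing sequence `0 = F₀ < F₁ < ⋯`,
then there are vectors `x, y` such that no operator of `Alg L` maps `x` to `y`
nor `y` to `x`; hence the invariant linear manifolds `M_x` and `M_y` are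
incomparable, so the invariant linear manifolds of `Alg L` are not totally
ordered by inclusion. -/
theorem stmt14 (L : Set (H →L[ℂ] H)) (hnest : IsNest L)
    (F : ℕ → H →L[ℂ] H) (hF : ∀ n, F n ∈ L) (hF0 : F 0 = 0)
    (hinc : ∀ n, projLE (F n) (F (n + 1)) ∧ F n ≠ F (n + 1)) :
    ∃ x y : H,
      (∀ T : H →L[ℂ] H, InAlg L T → T x ≠ y) ∧
      (∀ T : H →L[ℂ] H, InAlg L T → T y ≠ x) ∧
      ¬ ({z | ∃ T : H →L[ℂ] H, InAlg L T ∧ T x = z} ⊆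
          {z | ∃ T : H →L[ℂ] H, InAlg L T ∧ T y = z}) ∧
      ¬ ({z | ∃ T : H →L[ℂ] H, InAlg L T ∧ T y = z} ⊆
          {z | ∃ T : H →L[ℂ] H, InAlg L T ∧ T x = z}) := by
  classical
  have hOP : ∀ P ∈ L, IsOrthoProj P := hnest.1.1
  have hsa : ∀ n, IsSelfAdjoint (F n) := fun n => (hOP _ (hF n)).1
  have hid : ∀ n (z : H), F n (F n z) = F n z := by
    intro n z
    have := (hOP _ (hF n)).2
    calc F n (F n z) = ((F n).comp (F n)) z := rfl
      _ = F n z := by rw [this]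
  -- monotonicity pointwise
  have hmono : ∀ m n, m ≤ n → ∀ z : H, F n (F m z) = F m z := by
    intro m n h
    induction n, h using Nat.le_induction with
    | base => exact hid m
    | succ n hmn ih =>
        intro z
        have h1 : (F (n+1)).comp (F n) = F n := (hinc n).1
        calc F (n+1) (F m z) = F (n+1) (F n (F m z)) := by rw [ih z]
          _ = ((F (n+1)).comp (F n)) (F m z) := rfl
          _ = F n (F m z) := by rw [h1]
          _ = F m z := ih z
  -- flipped composition, via adjoints
  have hflip : ∀ m n, m ≤ n → ∀ z : H, F m (F n z) = F m z := by
    intro m n h z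
    have hc : (F n).comp (F m) = F m := by
      ext w; exact hmono m n h w
    have hmul : F n * F m = F m := hc
    have h2 := congrArg star hmul
    rw [star_mul, (hsa n).star_eq, (hsa m).star_eq] at h2
    calc F m (F n z) = (F m * F n) z := rfl
      _ = F m z := by rw [h2]
  -- choose unit vectors in the gaps
  have hQ : ∀ n, ∃ v : H, F (n+1) v - F n v ≠ 0 := by
    intro n
    by_contra hcon
    push_neg at hcon
    apply (hinc n).2
    ext v
    have := hcon v
    rw [sub_eq_zero] at this
    exact this.symm
  choose v hv using hQ
  set u : ℕ → H := fun n => ‖F (n+1) (v n) - F n (v n)‖⁻¹ • (F (n+1) (v n) - F n (v n)) with hu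
  have hnu : ∀ n, ‖u n‖ = 1 := by
    intro n
    rw [hu]
    simp only [norm_smul, norm_inv, norm_norm]
    exact inv_mul_cancel₀ (norm_ne_zero_iff.mpr (hv n))
  have hFtop : ∀ n, F (n+1) (u n) = u n := by
    intro n
    rw [hu]
    simp only [ContinuousLinearMap.map_smul_of_tower, map_sub]
    rw [hid (n+1), hmono n (n+1) (Nat.le_succ n)]
  have hFbot : ∀ n, F n (u n) = 0 := by
    intro n
    rw [hu]
    simp only [ContinuousLinearMap.map_smul_of_tower, map_sub]
    rw [hflip n (n+1) (Nat.le_succ n), hid n]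
    simp
  have hmem : ∀ m n, n < m → F m (u n) = u n := by
    intro m n h
    calc F m (u n) = F m (F (n+1) (u n)) := by rw [hFtop]
      _ = F (n+1) (u n) := hmono (n+1) m h (u n)
      _ = u n := hFtop n
  have horth0 : ∀ m n, m ≤ n → F m (u n) = 0 := by
    intro m n h
    have h1 := hflip m n h (u n)
    rw [← h1, hFbot n, map_zero]
  have hsym : ∀ n (a b : H), ⟪F n a, b⟫ = ⟪a, F n b⟫ := fun n a b => (hsa n).isSymmetric a b
  have horth : ∀ a b, a ≠ b → ⟪u a, u b⟫ = 0 := by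
    intro a b hab
    rcases Nat.lt_or_ge a b with h | h
    · calc ⟪u a, u b⟫ = ⟪F (a+1) (u a), u b⟫ := by rw [hFtop]
        _ = ⟪u a, F (a+1) (u b)⟫ := hsym _ _ _
        _ = 0 := by rw [horth0 (a+1) b h, inner_zero_right]
    · have h' : b < a := lt_of_le_of_ne h (Ne.symm hab)
      calc ⟪u a, u b⟫ = ⟪u a, F (b+1) (u b)⟫ := by rw [hFtop]
        _ = ⟪F (b+1) (u a), u b⟫ := (hsym _ _ _).symm
        _ = 0 := by rw [horth0 (b+1) a h', inner_zero_left]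
  have hself : ∀ n, ⟪u n, u n⟫ = 1 := by
    intro n
    rw [inner_self_eq_norm_sq_to_K, hnu]
    norm_num
  have hnormC : ∀ n, ‖((sC n : ℝ) : ℂ)‖ = sC n := by
    intro n
    rw [Complex.norm_real, Real.norm_eq_abs, abs_of_pos (sC_pos n)]
  -- summability
  have hhalf_even : ∀ j, sC (2*(j+1)) ≤ sC (2*j) / 2 := by
    intro j
    have h := sC_two_step (2*j)
    rw [show 2*(j+1) = 2*j+2 by ring]
    exact h
  have hhalf_odd : ∀ j, sC (2*(j+1)+1) ≤ sC (2*j+1) / 2 := by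
    intro j
    have h := sC_two_step (2*j+1)
    rw [show 2*(j+1)+1 = 2*j+1+2 by ring]
    exact h
  have hpos_even : ∀ j, (0:ℝ) ≤ sC (2*j) := fun j => (sC_pos _).le
  have hpos_odd : ∀ j, (0:ℝ) ≤ sC (2*j+1) := fun j => (sC_pos _).le
  have hsum_even : Summable (fun j => sC (2*j)) := summable_half hpos_even hhalf_even
  have hsum_odd : Summable (fun j => sC (2*j+1)) := summable_half hpos_odd hhalf_odd
  have hsx : Summable (fun j => ((sC (2*j) : ℂ)) • u (2*j)) := by
    apply Summable.of_norm
    have h : (fun j => ‖((sC (2*j):ℂ)) • u (2*j)‖) = fun j => sC (2*j) := by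
      funext j
      rw [norm_smul, hnu, mul_one, hnormC]
    rw [h]; exact hsum_even
  have hsy : Summable (fun j => ((sC (2*j+1) : ℂ)) • u (2*j+1)) := by
    apply Summable.of_norm
    have h : (fun j => ‖((sC (2*j+1):ℂ)) • u (2*j+1)‖) = fun j => sC (2*j+1) := by
      funext j
      rw [norm_smul, hnu, mul_one, hnormC]
    rw [h]; exact hsum_odd
  set x : H := ∑' j, ((sC (2*j) : ℂ)) • u (2*j) with hx
  set y : H := ∑' j, ((sC (2*j+1) : ℂ)) • u (2*j+1) with hy
  have hxk : ∀ k, ⟪u (2*k), x⟫ = (sC (2*k) : ℂ) := by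
    intro k
    have hmap := (innerSL ℂ (u (2*k))).map_tsum hsx
    calc ⟪u (2*k), x⟫ = innerSL ℂ (u (2*k)) x := rfl
      _ = ∑' j, innerSL ℂ (u (2*k)) (((sC (2*j):ℂ)) • u (2*j)) := hmap
      _ = (sC (2*k) : ℂ) := by
          rw [tsum_eq_single k ?_]
          · rw [innerSL_apply_apply, inner_smul_right, hself, mul_one]
          · intro j hj
            rw [innerSL_apply_apply, inner_smul_right, horth _ _ (by omega), mul_zero]
  have hyk : ∀ k, ⟪u (2*k+1), y⟫ = (sC (2*k+1) : ℂ) := by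
    intro k
    have hmap := (innerSL ℂ (u (2*k+1))).map_tsum hsy
    calc ⟪u (2*k+1), y⟫ = innerSL ℂ (u (2*k+1)) y := rfl
      _ = ∑' j, innerSL ℂ (u (2*k+1)) (((sC (2*j+1):ℂ)) • u (2*j+1)) := hmap
      _ = (sC (2*k+1) : ℂ) := by
          rw [tsum_eq_single k ?_]
          · rw [innerSL_apply_apply, inner_smul_right, hself, mul_one]
          · intro j hj
            rw [innerSL_apply_apply, inner_smul_right, horth _ _ (by omega), mul_zero]
  -- the coprojections
  set E : ℕ → H →L[ℂ] H := fun m => 1 - F m with hE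
  have hEapp : ∀ m (z:H), E m z = z - F m z := by
    intro m z
    simp [hE]
  have hEu_hi : ∀ m n, m ≤ n → E m (u n) = u n := by
    intro m n h
    rw [hEapp, horth0 m n h, sub_zero]
  have hEu_lo : ∀ m n, n < m → E m (u n) = 0 := by
    intro m n h
    rw [hEapp, hmem m n h, sub_self]
  have hEsym : ∀ m (a b : H), ⟪E m a, b⟫ = ⟪a, E m b⟫ := by
    intro m a b
    rw [hEapp, hEapp, inner_sub_left, inner_sub_right, hsym]
  have hEcontract : ∀ m (z : H), ‖E m z‖ ≤ ‖z‖ := by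
    intro m z
    have hFz : F m (E m z) = 0 := by rw [hEapp, map_sub, hid m, sub_self]
    have hEE : E m (E m z) = E m z := by rw [hEapp m (E m z), hFz, sub_zero]
    have h1 : ⟪E m z, E m z⟫ = ⟪z, E m z⟫ := by
      rw [hEsym m z (E m z), hEE]
    have h2 := inner_self_eq_norm_sq_to_K (𝕜 := ℂ) (E := H) (E m z)
    have h4 : ‖(⟪z, E m z⟫ : ℂ)‖ = ‖E m z‖^2 := by
      rw [← h1, h2, norm_pow, RCLike.norm_ofReal, abs_of_nonneg (norm_nonneg _)]
    have h3 : ‖E m z‖^2 ≤ ‖z‖ * ‖E m z‖ := by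
      rw [← h4]
      exact norm_inner_le_norm z (E m z)
    rcases (norm_nonneg (E m z)).eq_or_lt with h0 | h0
    · linarith [norm_nonneg z]
    · nlinarith [h3, h0]
  have hkey : ∀ (T : H →L[ℂ] H), InAlg L T → ∀ m (w : H), ‖E m (T w)‖ ≤ ‖T‖ * ‖E m w‖ := by
    intro T hT m w
    have hinv : ∀ z : H, F m (T (F m z)) = T (F m z) := by
      intro z
      have h1 := hT (F m) (hF m)
      calc F m (T (F m z)) = ((F m).comp (T.comp (F m))) z := rfl
        _ = (T.comp (F m)) z := by rw [h1]
        _ = T (F m z) := rfl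
    have hEzero : E m (T (F m w)) = 0 := by
      rw [hEapp, hinv w, sub_self]
    have hw : F m w + E m w = w := by rw [hEapp]; abel
    have hdec : E m (T w) = E m (T (E m w)) := by
      calc E m (T w) = E m (T (F m w + E m w)) := by rw [hw]
        _ = E m (T (F m w)) + E m (T (E m w)) := by rw [map_add, map_add]
        _ = E m (T (E m w)) := by rw [hEzero, zero_add]
    calc ‖E m (T w)‖ = ‖E m (T (E m w))‖ := by rw [hdec]
      _ ≤ ‖T (E m w)‖ := hEcontract m _
      _ ≤ ‖T‖ * ‖E m w‖ := T.le_opNorm _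
  -- upper tail bounds
  have hEx_upper : ∀ k, ‖E (2*k+1) x‖ ≤ 2 * sC (2*(k+1)) := by
    intro k
    have hmapE := (E (2*k+1)).map_tsum hsx
    have hnormf : ∀ j, ‖((sC (2*j):ℂ)) • E (2*k+1) (u (2*j))‖
        = (if k+1 ≤ j then sC (2*j) else 0) := by
      intro j
      by_cases h : k+1 ≤ j
      · rw [if_pos h, hEu_hi _ _ (by omega), norm_smul, hnu, mul_one, hnormC]
      · rw [if_neg h, hEu_lo _ _ (by omega), smul_zero, norm_zero]
    have heq : E (2*k+1) x = ∑' j, ((sC (2*j):ℂ)) • E (2*k+1) (u (2*j)) := by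
      rw [hmapE]
      exact tsum_congr fun j => map_smul _ _ _
    have hsumnorm : Summable (fun j => ‖((sC (2*j):ℂ)) • E (2*k+1) (u (2*j))‖) := by
      apply Summable.of_nonneg_of_le (fun j => norm_nonneg _) (fun j => ?_) hsum_even
      rw [hnormf j]
      by_cases h : k+1 ≤ j <;> simp [h, hpos_even j]
    calc ‖E (2*k+1) x‖ = ‖∑' j, ((sC (2*j):ℂ)) • E (2*k+1) (u (2*j))‖ := by rw [heq]
      _ ≤ ∑' j, ‖((sC (2*j):ℂ)) • E (2*k+1) (u (2*j))‖ := norm_tsum_le_tsum_norm hsumnorm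
      _ = ∑' j, (if k+1 ≤ j then sC (2*j) else 0) := tsum_congr fun j => hnormf j
      _ ≤ 2 * sC (2*(k+1)) := tsum_tail_le hpos_even hhalf_even (k+1)
  have hEy_upper : ∀ k, ‖E (2*k) y‖ ≤ 2 * sC (2*k+1) := by
    intro k
    have hmapE := (E (2*k)).map_tsum hsy
    have hnormf : ∀ j, ‖((sC (2*j+1):ℂ)) • E (2*k) (u (2*j+1))‖
        = (if k ≤ j then sC (2*j+1) else 0) := by
      intro j
      by_cases h : k ≤ j
      · rw [if_pos h, hEu_hi _ _ (by omega), norm_smul, hnu, mul_one, hnormC]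
      · rw [if_neg h, hEu_lo _ _ (by omega), smul_zero, norm_zero]
    have heq : E (2*k) y = ∑' j, ((sC (2*j+1):ℂ)) • E (2*k) (u (2*j+1)) := by
      rw [hmapE]
      exact tsum_congr fun j => map_smul _ _ _
    have hsumnorm : Summable (fun j => ‖((sC (2*j+1):ℂ)) • E (2*k) (u (2*j+1))‖) := by
      apply Summable.of_nonneg_of_le (fun j => norm_nonneg _) (fun j => ?_) hsum_odd
      rw [hnormf j]
      by_cases h : k ≤ j <;> simp [h, hpos_odd j]
    calc ‖E (2*k) y‖ = ‖∑' j, ((sC (2*j+1):ℂ)) • E (2*k) (u (2*j+1))‖ := by rw [heq]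
      _ ≤ ∑' j, ‖((sC (2*j+1):ℂ)) • E (2*k) (u (2*j+1))‖ := norm_tsum_le_tsum_norm hsumnorm
      _ = ∑' j, (if k ≤ j then sC (2*j+1) else 0) := tsum_congr fun j => hnormf j
      _ ≤ 2 * sC (2*k+1) := tsum_tail_le hpos_odd hhalf_odd k
  -- lower bounds
  have hEy_lower : ∀ k, sC (2*k+1) ≤ ‖E (2*k+1) y‖ := by
    intro k
    have h1 : ⟪u (2*k+1), E (2*k+1) y⟫ = (sC (2*k+1) : ℂ) := by
      rw [← hEsym, hEu_hi _ _ (le_refl _)]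
      exact hyk k
    calc sC (2*k+1) = ‖((sC (2*k+1) : ℝ) : ℂ)‖ := (hnormC _).symm
      _ = ‖⟪u (2*k+1), E (2*k+1) y⟫‖ := by rw [h1]
      _ ≤ ‖u (2*k+1)‖ * ‖E (2*k+1) y‖ := norm_inner_le_norm _ _
      _ = ‖E (2*k+1) y‖ := by rw [hnu, one_mul]
  have hEx_lower : ∀ k, sC (2*k) ≤ ‖E (2*k) x‖ := by
    intro k
    have h1 : ⟪u (2*k), E (2*k) x⟫ = (sC (2*k) : ℂ) := by
      rw [← hEsym, hEu_hi _ _ (le_refl _)]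
      exact hxk k
    calc sC (2*k) = ‖((sC (2*k) : ℝ) : ℂ)‖ := (hnormC _).symm
      _ = ‖⟪u (2*k), E (2*k) x⟫‖ := by rw [h1]
      _ ≤ ‖u (2*k)‖ * ‖E (2*k) x‖ := norm_inner_le_norm _ _
      _ = ‖E (2*k) x‖ := by rw [hnu, one_mul]
  -- no T with T x = y
  have bullet1 : ∀ T : H →L[ℂ] H, InAlg L T → T x ≠ y := by
    intro T hT hTxy
    have hbig : ∀ k : ℕ, (2:ℝ)^k ≤ 2 * ‖T‖ := by
      intro k
      have h1 : sC (2*k+1) ≤ ‖T‖ * (2 * sC (2*(k+1))) := by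
        calc sC (2*k+1) ≤ ‖E (2*k+1) y‖ := hEy_lower k
          _ = ‖E (2*k+1) (T x)‖ := by rw [hTxy]
          _ ≤ ‖T‖ * ‖E (2*k+1) x‖ := hkey T hT _ x
          _ ≤ ‖T‖ * (2 * sC (2*(k+1))) :=
              mul_le_mul_of_nonneg_left (hEx_upper k) (norm_nonneg T)
      have h2 : sC (2*k+1) = sC (2*(k+1)) * (2 * 2^k) := by
        have h3 := sC_scale (2*k+1)
        rw [show 2*k+1+1 = 2*(k+1) by ring] at h3
        rw [h3, sqrt2_even_pow (k+1)]
        ring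
      rw [h2] at h1
      have hp := sC_pos (2*(k+1))
      by_contra hcon
      push_neg at hcon
      have h4 := mul_lt_mul_of_pos_right hcon hp
      have h5 : (0:ℝ) < sC (2*(k+1)) * 2^k :=
        mul_pos hp (pow_pos (by norm_num) k)
      nlinarith [h1, h4, h5]
    obtain ⟨k, hk⟩ := pow_unbounded_of_one_lt (2 * ‖T‖) (one_lt_two (α := ℝ))
    exact absurd (hbig k) (not_le.mpr hk)
  -- no T with T y = x
  have bullet2 : ∀ T : H →L[ℂ] H, InAlg L T → T y ≠ x := by
    intro T hT hTyx
    have hbig : ∀ k : ℕ, (2:ℝ)^k ≤ 2 * ‖T‖ := by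
      intro k
      have h1 : sC (2*k) ≤ ‖T‖ * (2 * sC (2*k+1)) := by
        calc sC (2*k) ≤ ‖E (2*k) x‖ := hEx_lower k
          _ = ‖E (2*k) (T y)‖ := by rw [hTyx]
          _ ≤ ‖T‖ * ‖E (2*k) y‖ := hkey T hT _ y
          _ ≤ ‖T‖ * (2 * sC (2*k+1)) :=
              mul_le_mul_of_nonneg_left (hEy_upper k) (norm_nonneg T)
      have h2 : sC (2*k+1) * 2^k ≤ sC (2*k) := by
        have h3 := sC_scale (2*k)
        have h4 : (Real.sqrt 2) ^ (2*k+1) = 2^k * Real.sqrt 2 := by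
          rw [pow_succ, sqrt2_even_pow]
        rw [h3, h4]
        have h5 : (2:ℝ)^k ≤ 2^k * Real.sqrt 2 :=
          le_mul_of_one_le_right (pow_nonneg (by norm_num) k) one_lt_sqrt2.le
        have h6 : (0:ℝ) ≤ sC (2*k+1) := (sC_pos _).le
        exact mul_le_mul_of_nonneg_left h5 h6
      have h7 : sC (2*k+1) * 2^k ≤ ‖T‖ * (2 * sC (2*k+1)) := le_trans h2 h1
      have hp := sC_pos (2*k+1)
      by_contra hcon
      push_neg at hcon
      have h4 := mul_lt_mul_of_pos_right hcon hp
      nlinarith [h7, hp, h4]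

    obtain ⟨k, hk⟩ := pow_unbounded_of_one_lt (2 * ‖T‖) (one_lt_two (α := ℝ))
    exact absurd (hbig k) (not_le.mpr hk)
  have hone : InAlg L (1 : H →L[ℂ] H) := by
    intro P hP
    have h2 := (hOP P hP).2
    rw [ContinuousLinearMap.one_def, ContinuousLinearMap.id_comp, h2]
  refine ⟨x, y, bullet1, bullet2, ?_, ?_⟩
  · intro hsub
    have hxmem : x ∈ {z | ∃ T : H →L[ℂ] H, InAlg L T ∧ T x = z} :=
      ⟨(1 : H →L[ℂ] H), hone, by simp⟩
    obtain ⟨T, hT, hTy⟩ := hsub hxmem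
    exact bullet2 T hT hTy
  · intro hsub
    have hymem : y ∈ {z | ∃ T : H →L[ℂ] H, InAlg L T ∧ T y = z} :=
      ⟨(1 : H →L[ℂ] H), hone, by simp⟩
    obtain ⟨T, hT, hTx⟩ := hsub hymem
    exact bullet1 T hT hTx

end
end

section
/- Let (F_n)_{n≥0} be a strictly increasing sequence of orthogonal projections with F_0 = 0. Then there exist two decreasing sequences of positive reals (λ_n) and (μ_n) and vectors x, y such that x ∈ range(D_μ) \ range(D_λ) and y ∈ range(D_λ) \ range(D_μ), where D_λ = Σ λ_n (F_n - F_{n-1}) and D_μ = Σ μ_n (F_n - F_{n-1}). Hence the ranges of D_λ and D_μ are not comparable under inclusion. -/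
noncomputable section

variable {H : Type*} [NormedAddCommGroup H] [InnerProductSpace ℂ H] [CompleteSpace H]

set_option linter.unusedSectionVars false


namespace Stmt16Aux

/-- Pair of exponent sequences. -/
def ab : ℕ → ℕ × ℕ
  | 0 => (0, 0)
  | n+1 => if Even (n+1) then ((ab n).2 + (n+1), (ab n).2) else ((ab n).1, (ab n).1 + (n+1))

lemma ab_even {n : ℕ} (h : Even n) : (ab n).1 = (ab n).2 + n := by
  cases n with
  | zero => simp [ab]
  | succ k => simp [ab, if_pos h]

lemma ab_odd {n : ℕ} (h : Odd n) : (ab n).2 = (ab n).1 + n := by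
  cases n with
  | zero => exact absurd h (by simp)
  | succ k =>
    have : ¬ Even (k+1) := Nat.not_even_iff_odd.mpr h
    simp [ab, if_neg this]

lemma ab_mono1 : Monotone fun n => (ab n).1 := by
  apply monotone_nat_of_le_succ
  intro n
  by_cases h : Even (n+1)
  · have hno : Odd n := by
      exact Nat.not_even_iff_odd.mp (Nat.even_add_one.mp h)
    have h2 := ab_odd hno
    show (ab n).1 ≤ (ab (n+1)).1
    simp only [ab, if_pos h]
    omega
  · show (ab n).1 ≤ (ab (n+1)).1
    simp [ab, if_neg h]

lemma ab_mono2 : Monotone fun n => (ab n).2 := by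
  apply monotone_nat_of_le_succ
  intro n
  by_cases h : Even (n+1)
  · show (ab n).2 ≤ (ab (n+1)).2
    simp [ab, if_pos h]
  · have hne : Even n := by
      by_contra hc
      exact h (Nat.even_add_one.mpr hc)
    have h2 := ab_even hne
    show (ab n).2 ≤ (ab (n+1)).2
    simp only [ab, if_neg h]
    omega

/-- the sequence `l`. -/
noncomputable def lseq (n : ℕ) : ℝ := (1/4 : ℝ) ^ (ab n).1

/-- the sequence `m`. -/
noncomputable def mseq (n : ℕ) : ℝ := (1/4 : ℝ) ^ (ab n).2

lemma lseq_pos (n : ℕ) : 0 < lseq n := pow_pos (by norm_num) _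
lemma mseq_pos (n : ℕ) : 0 < mseq n := pow_pos (by norm_num) _
lemma lseq_le_one (n : ℕ) : lseq n ≤ 1 := pow_le_one₀ (by norm_num) (by norm_num)
lemma mseq_le_one (n : ℕ) : mseq n ≤ 1 := pow_le_one₀ (by norm_num) (by norm_num)

lemma lseq_anti : Antitone lseq := fun a b hab =>
  pow_le_pow_of_le_one (by norm_num) (by norm_num) (ab_mono1 hab)

lemma mseq_anti : Antitone mseq := fun a b hab =>
  pow_le_pow_of_le_one (by norm_num) (by norm_num) (ab_mono2 hab)

lemma mseq_eq_of_even {n : ℕ} (h : Even n) : mseq n = 4 ^ n * lseq n := by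
  have := ab_even h
  rw [lseq, mseq, this]
  rw [pow_add]
  rw [div_pow, one_pow]
  field_simp
  rw [← mul_pow]; norm_num

lemma lseq_eq_of_odd {n : ℕ} (h : Odd n) : lseq n = 4 ^ n * mseq n := by
  have := ab_odd h
  rw [lseq, mseq, this]
  rw [pow_add]
  rw [div_pow, one_pow]
  field_simp
  rw [← mul_pow]; norm_num

end Stmt16Aux
namespace Stmt16Aux

noncomputable def cx (n : ℕ) : ℝ := if Even (n+1) then mseq (n+1) * (1/2)^n else 0
noncomputable def cy (n : ℕ) : ℝ := if Odd (n+1) then lseq (n+1) * (1/2)^n else 0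

lemma cx_nonneg (n : ℕ) : 0 ≤ cx n := by
  rw [cx]; split_ifs
  · exact mul_nonneg (mseq_pos _).le (by positivity)
  · exact le_refl 0

lemma cy_nonneg (n : ℕ) : 0 ≤ cy n := by
  rw [cy]; split_ifs
  · exact mul_nonneg (lseq_pos _).le (by positivity)
  · exact le_refl 0

lemma sq_half_pow (n : ℕ) : ((1/2:ℝ)^n)^2 = (1/4)^n := by
  rw [← pow_mul, mul_comm, pow_mul]; norm_num

lemma cx_div_summable : Summable fun n => (cx n / mseq (n+1)) ^ 2 := by
  apply Summable.of_nonneg_of_le (fun n => sq_nonneg _) _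
    (summable_geometric_of_lt_one (by norm_num : (0:ℝ) ≤ 1/4) (by norm_num))
  intro n
  rw [cx]
  split_ifs with h
  · rw [mul_comm, mul_div_assoc, div_self (mseq_pos _).ne', mul_one, sq_half_pow]
  · simp

lemma cy_div_summable : Summable fun n => (cy n / lseq (n+1)) ^ 2 := by
  apply Summable.of_nonneg_of_le (fun n => sq_nonneg _) _
    (summable_geometric_of_lt_one (by norm_num : (0:ℝ) ≤ 1/4) (by norm_num))
  intro n
  rw [cy]
  split_ifs with h
  · rw [mul_comm, mul_div_assoc, div_self (lseq_pos _).ne', mul_one, sq_half_pow]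
  · simp

lemma four_two (k : ℕ) : (4:ℝ)^(k+1) * (1/2)^k = 4 * 2^k := by
  rw [pow_succ, mul_comm ((4:ℝ)^k) 4, mul_assoc, ← mul_pow]; norm_num

lemma cx_big (N : ℕ) : ∃ k ≥ N, 1 ≤ cx k / lseq (k+1) := by
  refine ⟨2*N+1, by omega, ?_⟩
  have heven : Even (2*N+1+1) := ⟨N+1, by ring⟩
  rw [cx, if_pos heven, mseq_eq_of_even heven]
  have hne := (lseq_pos (2*N+1+1)).ne'
  have heq : (4:ℝ)^(2*N+1+1) * lseq (2*N+1+1) * (1/2)^(2*N+1) / lseq (2*N+1+1)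
      = 4^(2*N+1+1) * (1/2)^(2*N+1) := by
    field_simp
  rw [heq, four_two]
  have h3 : (1:ℝ) ≤ 2^(2*N+1) := one_le_pow₀ (by norm_num)
  linarith

lemma cy_big (N : ℕ) : ∃ k ≥ N, 1 ≤ cy k / mseq (k+1) := by
  refine ⟨2*N, by omega, ?_⟩
  have hodd : Odd (2*N+1) := ⟨N, by ring⟩
  rw [cy, if_pos hodd, lseq_eq_of_odd hodd]
  have hne := (mseq_pos (2*N+1)).ne'
  have heq : (4:ℝ)^(2*N+1) * mseq (2*N+1) * (1/2)^(2*N) / mseq (2*N+1)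
      = 4^(2*N+1) * (1/2)^(2*N) := by
    field_simp
  rw [heq]
  have := four_two (2*N)
  rw [show 2*N+1 = 2*N+1 from rfl, this]
  have h3 : (1:ℝ) ≤ 2^(2*N) := one_le_pow₀ (by norm_num)
  linarith

end Stmt16Aux


namespace Stmt16Aux


section E

variable (E : ℕ → H →L[ℂ] H)

/-- symmetry -/
lemma sym (hsa : ∀ n, IsSelfAdjoint (E n)) (n : ℕ) (x y : H) :
    (inner ℂ ((E n) x) y : ℂ) = inner ℂ x ((E n) y) := (hsa n).isSymmetric x y

variable (hsa : ∀ n, IsSelfAdjoint (E n))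
  (hoi : ∀ m n, E m * E n = if m = n then E n else 0)

include hsa hoi

lemma inner_EE (m n : ℕ) (hmn : m ≠ n) (a b : H) :
    (inner ℂ ((E m) a) ((E n) b) : ℂ) = 0 := by
  rw [sym E hsa]
  have : (E m) ((E n) b) = (E m * E n) b := rfl
  rw [this, hoi m n, if_neg hmn]
  simp

lemma ofam : OrthogonalFamily ℂ (fun n => (LinearMap.range (E n : H →ₗ[ℂ] H) : Submodule ℂ H))
    (fun n => (LinearMap.range (E n : H →ₗ[ℂ] H)).subtypeₗᵢ) := by
  intro i j hij v w
  obtain ⟨a, ha⟩ := v.2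
  obtain ⟨b, hb⟩ := w.2
  show (inner ℂ (v : H) (w : H) : ℂ) = 0
  rw [← ha, ← hb]
  exact inner_EE E hsa hoi i j hij a b

/-- summability of orthogonal pieces -/
lemma sum_exists (g : ℕ → H) (hg : ∀ n, E n (g n) = g n)
    (hs : Summable fun n => ‖g n‖ ^ 2) : ∃ S : H, HasSum g S := by
  have hmem : ∀ n, g n ∈ LinearMap.range (E n : H →ₗ[ℂ] H) := fun n => ⟨g n, hg n⟩
  set f : ∀ n, (LinearMap.range (E n : H →ₗ[ℂ] H) : Submodule ℂ H) := fun n => ⟨g n, hmem n⟩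
  have : Summable fun n => (LinearMap.range (E n : H →ₗ[ℂ] H)).subtypeₗᵢ (f n) := by
    rw [(ofam E hsa hoi).summable_iff_norm_sq_summable]
    exact hs
  have h2 : (fun n => (LinearMap.range (E n : H →ₗ[ℂ] H)).subtypeₗᵢ (f n)) = g := rfl
  rw [h2] at this
  exact ⟨_, this.hasSum⟩

/-- component extraction -/
lemma component (g : ℕ → H) (hg : ∀ n, E n (g n) = g n) {S : H} (hS : HasSum g S) (k : ℕ) :
    E k S = g k := by
  have h1 : HasSum (fun n => (E k) (g n)) ((E k) S) := (E k).hasSum hS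
  have h2 : (fun n => (E k) (g n)) = fun n => if n = k then g k else 0 := by
    funext n
    rw [← hg n]
    have : (E k) ((E n) (g n)) = (E k * E n) (g n) := rfl
    rw [this, hoi k n]
    by_cases h : n = k
    · subst h; simp [hg]
    · rw [if_neg (fun hh : k = n => h hh.symm), if_neg h]; simp
  rw [h2] at h1
  exact h1.unique (hasSum_ite_eq k (g k))

/-- norm of an orthogonal sum -/
lemma norm_sum (g : ℕ → H) (hg : ∀ n, E n (g n) = g n) {S : H} (hS : HasSum g S) :
    HasSum (fun n => ‖g n‖ ^ 2) (‖S‖ ^ 2) := by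
  have h1 : HasSum (fun n => (innerSL ℂ S) (g n)) ((innerSL ℂ S) S) := (innerSL ℂ S).hasSum hS
  have h2 : (fun n => (innerSL ℂ S) (g n)) = fun n => (inner ℂ (g n) (g n) : ℂ) := by
    funext n
    show (inner ℂ S (g n) : ℂ) = inner ℂ (g n) (g n)
    rw [← hg n, ← sym E hsa n, component E hsa hoi g hg hS n, hg n]
  rw [h2] at h1
  have h3 := Complex.reCLM.hasSum h1
  have h4 : (fun n => Complex.reCLM (inner ℂ (g n) (g n) : ℂ)) = fun n => ‖g n‖ ^ 2 := by
    funext n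
    exact inner_self_eq_norm_sq (𝕜 := ℂ) (g n)
  have h5 : Complex.reCLM (((innerSL ℂ) S) S) = ‖S‖ ^ 2 := inner_self_eq_norm_sq (𝕜 := ℂ) S
  rw [h4, h5] at h3
  exact h3

variable (hbes : ∀ (z : H) (N : ℕ), ∑ n ∈ Finset.range N, ‖(E n) z‖ ^ 2 ≤ ‖z‖ ^ 2)

include hbes

lemma bessel_summable (z : H) : Summable fun n => ‖(E n) z‖ ^ 2 :=
  summable_of_sum_range_le (fun n => sq_nonneg _) (hbes z)

lemma bessel_tsum (z : H) : ∑' n, ‖(E n) z‖ ^ 2 ≤ ‖z‖ ^ 2 :=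
  Real.tsum_le_of_sum_range_le (fun n => sq_nonneg _) (hbes z)

/-- construction of the diagonal operator -/
lemma exists_D (p : ℕ → ℝ) (hp1 : ∀ n, |p n| ≤ 1) :
    ∃ D : H →L[ℂ] H, ∀ v : H, HasSum (fun n => ((p (n+1) : ℂ)) • (E n) v) (D v) := by
  set g : H → ℕ → H := fun v n => ((p (n+1) : ℂ)) • (E n) v with hgdef
  have hg : ∀ v n, (E n) (g v n) = g v n := by
    intro v n
    simp only [hgdef, map_smul]
    congr 1
    show (E n * E n) v = (E n) v
    rw [hoi n n, if_pos rfl]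
  have hnorm : ∀ v n, ‖g v n‖ ^ 2 ≤ ‖(E n) v‖ ^ 2 := by
    intro v n
    simp only [hgdef, norm_smul, Complex.norm_real, mul_pow]
    have h1 : ‖p (n+1)‖ ^ 2 ≤ 1 := by
      rw [sq_le_one_iff_abs_le_one]
      simpa [Real.norm_eq_abs] using hp1 (n+1)
    nlinarith [sq_nonneg ‖(E n) v‖, sq_nonneg ‖p (n+1)‖]
  have hsummable : ∀ v : H, Summable fun n => ‖g v n‖ ^ 2 := fun v =>
    Summable.of_nonneg_of_le (fun n => sq_nonneg _) (hnorm v) (bessel_summable E hsa hoi hbes v)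
  have hex : ∀ v : H, ∃ S, HasSum (g v) S := fun v =>
    sum_exists E hsa hoi (g v) (hg v) (hsummable v)
  choose D0 hD0 using hex
  have hadd : ∀ v w, D0 (v + w) = D0 v + D0 w := by
    intro v w
    refine (hD0 (v + w)).unique ?_
    have : g (v + w) = fun n => g v n + g w n := by
      funext n; simp [hgdef, map_add, smul_add]
    rw [this]
    exact (hD0 v).add (hD0 w)
  have hsmul : ∀ (c : ℂ) v, D0 (c • v) = c • D0 v := by
    intro c v
    refine (hD0 (c • v)).unique ?_
    have : g (c • v) = fun n => c • g v n := by
      funext n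
      simp only [hgdef, map_smul]
      rw [smul_comm]
    rw [this]
    exact (hD0 v).const_smul c
  have hbound : ∀ v, ‖D0 v‖ ≤ 1 * ‖v‖ := by
    intro v
    have h1 : HasSum (fun n => ‖g v n‖ ^ 2) (‖D0 v‖ ^ 2) :=
      norm_sum E hsa hoi (g v) (hg v) (hD0 v)
    have h2 : ‖D0 v‖ ^ 2 ≤ ‖v‖ ^ 2 := by
      rw [← h1.tsum_eq]
      calc ∑' n, ‖g v n‖ ^ 2 ≤ ∑' n, ‖(E n) v‖ ^ 2 :=
            Summable.tsum_le_tsum (hnorm v) (hsummable v) (bessel_summable E hsa hoi hbes v)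
        _ ≤ ‖v‖ ^ 2 := bessel_tsum E hsa hoi hbes v
    rw [one_mul]
    nlinarith [norm_nonneg (D0 v), norm_nonneg v]
  refine ⟨LinearMap.mkContinuous
    { toFun := D0, map_add' := hadd, map_smul' := hsmul } 1 hbound, fun v => hD0 v⟩

/-- master lemma: x in range of Dq but not Dp -/
lemma exists_xvec (e : ℕ → H) (he1 : ∀ n, ‖e n‖ = 1) (hee : ∀ n, (E n) (e n) = e n)
    (p q : ℕ → ℝ) (hp0 : ∀ n, 0 < p n) (hq0 : ∀ n, 0 < q n) (hq1 : ∀ n, q n ≤ 1)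
    (Dp Dq : H →L[ℂ] H)
    (hDp : ∀ v : H, HasSum (fun n => ((p (n+1) : ℂ)) • (E n) v) (Dp v))
    (hDq : ∀ v : H, HasSum (fun n => ((q (n+1) : ℂ)) • (E n) v) (Dq v))
    (c : ℕ → ℝ) (hc0 : ∀ n, 0 ≤ c n)
    (hcsum : Summable fun n => (c n / q (n+1)) ^ 2)
    (hbig : ∀ N : ℕ, ∃ k ≥ N, 1 ≤ c k / p (k+1)) :
    ∃ x : H, (∃ z, Dq z = x) ∧ ¬∃ z, Dp z = x := by
  -- the vector x
  set gx : ℕ → H := fun n => ((c n : ℂ)) • e n with hgx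
  have hgxmem : ∀ n, (E n) (gx n) = gx n := by
    intro n; simp [hgx, map_smul, hee n]
  have hgxnorm : ∀ n, ‖gx n‖ ^ 2 = (c n) ^ 2 := by
    intro n
    simp [hgx, norm_smul, Complex.norm_real, he1 n, abs_of_nonneg (hc0 n)]
  have hgxsummable : Summable fun n => ‖gx n‖ ^ 2 := by
    apply Summable.of_nonneg_of_le (fun n => sq_nonneg _) _ hcsum
    intro n
    rw [hgxnorm n]
    have h1 : c n ≤ c n / q (n+1) := by
      rw [le_div_iff₀ (hq0 (n+1))]
      nlinarith [hc0 n, hq1 (n+1), hq0 (n+1)]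
    exact pow_le_pow_left₀ (hc0 n) h1 2
  obtain ⟨x, hx⟩ := sum_exists E hsa hoi gx hgxmem hgxsummable
  refine ⟨x, ?_, ?_⟩
  · -- x ∈ range Dq
    set gz : ℕ → H := fun n => (((c n / q (n+1) : ℝ) : ℂ)) • e n with hgz
    have hgzmem : ∀ n, (E n) (gz n) = gz n := by
      intro n; simp [hgz, map_smul, hee n]
    have hgzsummable : Summable fun n => ‖gz n‖ ^ 2 := by
      apply Summable.of_nonneg_of_le (fun n => sq_nonneg _) _ hcsum
      intro n
      simp only [hgz, norm_smul, Complex.norm_real, he1 n, mul_one, Real.norm_eq_abs]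
      rw [sq_abs]
    obtain ⟨z, hz⟩ := sum_exists E hsa hoi gz hgzmem hgzsummable
    refine ⟨z, ?_⟩
    refine (hDq z).unique ?_
    have heq : (fun n => ((q (n+1) : ℂ)) • (E n) z) = gx := by
      funext n
      rw [component E hsa hoi gz hgzmem hz n]
      simp only [hgz, hgx, smul_smul]
      congr 1
      rw [← Complex.ofReal_mul]
      congr 1
      rw [mul_comm]; exact div_mul_cancel₀ (c n) (hq0 (n+1)).ne'
    rw [heq]
    exact hx
  · -- x ∉ range Dp
    rintro ⟨z, hz⟩
    have hzsum : HasSum (fun n => ((p (n+1) : ℂ)) • (E n) z) x := by rw [← hz]; exact hDp z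
    set gp : ℕ → H := fun n => ((p (n+1) : ℂ)) • (E n) z with hgp
    have hgpmem : ∀ n, (E n) (gp n) = gp n := by
      intro n
      simp only [hgp, map_smul]
      congr 1
      show (E n * E n) z = (E n) z
      rw [hoi n n, if_pos rfl]
    have hcomp : ∀ k, gp k = gx k := by
      intro k
      rw [← component E hsa hoi gp hgpmem hzsum k]
      exact component E hsa hoi gx hgxmem hx k
    have hEz : ∀ k, ‖(E k) z‖ = c k / p (k+1) := by
      intro k
      have h1 := hcomp k
      have h2 : ‖gp k‖ = p (k+1) * ‖(E k) z‖ := by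
        simp [hgp, norm_smul, Complex.norm_real, abs_of_pos (hp0 (k+1))]
      have h3 : ‖gx k‖ = c k := by
        simp [hgx, norm_smul, Complex.norm_real, he1 k, abs_of_nonneg (hc0 k)]
      rw [h1, h3] at h2
      field_simp [(hp0 (k+1)).ne'] at h2 ⊢
      linarith
    have hb := bessel_summable E hsa hoi hbes z
    have htend := hb.tendsto_atTop_zero
    have hev : ∀ᶠ k in Filter.atTop, ‖(E k) z‖ ^ 2 < 1 :=
      htend.eventually_lt_const one_pos
    obtain ⟨N, hN⟩ := Filter.eventually_atTop.mp hev
    obtain ⟨k, hkN, hk1⟩ := hbig N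
    have := hN k hkN
    rw [hEz k] at this
    nlinarith
end E

end Stmt16Aux


/-- Given a strictly increasing sequence of projections `Fₙ` with `F₀ = 0`,
there are decreasing sequences of positive reals `l, m` and vectors `x, y`
with `x ∈ range D_m \ range D_l` and `y ∈ range D_l \ range D_m`, where
`D_l = Σ lₙ (Fₙ - Fₙ₋₁)`; hence these two invariant operator ranges are not
comparable under inclusion. -/
theorem stmt16 (F : ℕ → H →L[ℂ] H) (hF : ∀ n, IsOrthoProj (F n)) (hF0 : F 0 = 0)
    (hinc : ∀ n, projLE (F n) (F (n + 1)) ∧ F n ≠ F (n + 1)) :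
    ∃ l m : ℕ → ℝ, (∀ n, 0 < l n) ∧ Antitone l ∧ (∀ n, 0 < m n) ∧ Antitone m ∧
      ∃ Dl Dm : H →L[ℂ] H,
        (∀ v : H, HasSum (fun n : ℕ => ((l (n + 1) : ℂ)) • ((F (n + 1) - F n) v)) (Dl v)) ∧
        (∀ v : H, HasSum (fun n : ℕ => ((m (n + 1) : ℂ)) • ((F (n + 1) - F n) v)) (Dm v)) ∧
        ∃ x y : H, (∃ z, Dm z = x) ∧ (¬ ∃ z, Dl z = x) ∧
          (∃ z, Dl z = y) ∧ ¬ ∃ z, Dm z = y := by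
  have hFsa : ∀ n, IsSelfAdjoint (F n) := fun n => (hF n).1
  have hFmul : ∀ n, F n * F n = F n := fun n => (hF n).2
  have hstep : ∀ n, F (n+1) * F n = F n := fun n => (hinc n).1
  have hFle : ∀ j k, j ≤ k → F k * F j = F j := by
    intro j k hjk
    induction k with
    | zero =>
      have : j = 0 := Nat.le_zero.mp hjk
      subst this; exact hFmul 0
    | succ k ih =>
      rcases Nat.lt_or_ge j (k+1) with h | h
      · have hjk' : j ≤ k := Nat.lt_succ_iff.mp h
        calc F (k+1) * F j = F (k+1) * (F k * F j) := by rw [ih hjk']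
          _ = F (k+1) * F k * F j := by rw [mul_assoc]
          _ = F k * F j := by rw [hstep k]
          _ = F j := ih hjk'
      · have : j = k+1 := le_antisymm hjk h
        subst this; exact hFmul _
  have hFle' : ∀ j k, j ≤ k → F j * F k = F j := by
    intro j k hjk
    have h := congrArg star (hFle j k hjk)
    rwa [star_mul, (hFsa j).star_eq, (hFsa k).star_eq] at h
  have hFmin : ∀ a b, F a * F b = F (min a b) := by
    intro a b; rcases le_total a b with h | h
    · rw [min_eq_left h]; exact hFle' a b h
    · rw [min_eq_right h]; exact hFle b a h
  set E : ℕ → H →L[ℂ] H := fun n => F (n+1) - F n with hE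
  have hsaE : ∀ n, IsSelfAdjoint (E n) := fun n => (hFsa (n+1)).sub (hFsa n)
  have hoi : ∀ m n, E m * E n = if m = n then E n else 0 := by
    intro m n
    by_cases h : m = n
    · subst h; rw [if_pos rfl]
      show (F (m+1) - F m) * (F (m+1) - F m) = F (m+1) - F m
      rw [sub_mul, mul_sub, mul_sub, hFmin, hFmin, hFmin, hFmin]
      rw [min_self, min_eq_right (Nat.le_succ m), min_eq_left (Nat.le_succ m), min_self]
      abel
    · rw [if_neg h]
      show (F (m+1) - F m) * (F (n+1) - F n) = 0
      rw [sub_mul, mul_sub, mul_sub, hFmin, hFmin, hFmin, hFmin]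
      rcases lt_or_gt_of_ne h with hlt | hgt
      · rw [min_eq_left (by omega : m+1 ≤ n+1), min_eq_left (by omega : m+1 ≤ n),
          min_eq_left (by omega : m ≤ n+1), min_eq_left (by omega : m ≤ n)]
        abel
      · rw [min_eq_right (by omega : n+1 ≤ m+1), min_eq_right (by omega : n ≤ m+1),
          min_eq_right (by omega : n+1 ≤ m), min_eq_right (by omega : n ≤ m)]
        abel
  -- Bessel inequality
  have hbes : ∀ (z : H) (N : ℕ), ∑ n ∈ Finset.range N, ‖(E n) z‖ ^ 2 ≤ ‖z‖ ^ 2 := by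
    intro z N
    have hterm : ∀ n, ‖(E n) z‖ ^ 2 = ((inner ℂ z ((E n) z) : ℂ)).re := by
      intro n
      rw [← inner_self_eq_norm_sq (𝕜 := ℂ)]
      show ((inner ℂ ((E n) z) ((E n) z) : ℂ)).re = ((inner ℂ z ((E n) z) : ℂ)).re
      congr 1
      calc (inner ℂ ((E n) z) ((E n) z) : ℂ) = inner ℂ z ((E n) ((E n) z)) :=
            (hsaE n).isSymmetric _ _
        _ = inner ℂ z ((E n) z) := by
            rw [show (E n) ((E n) z) = (E n * E n) z from rfl, hoi n n, if_pos rfl]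
    have htel : ∑ n ∈ Finset.range N, (E n) z = F N z := by
      have : ∀ n, (E n) z = F (n+1) z - F n z := fun n => rfl
      simp_rw [this]
      rw [Finset.sum_range_sub (fun n => F n z), hF0]
      simp
    have hre : ((inner ℂ z (F N z) : ℂ)).re = ‖F N z‖ ^ 2 := by
      rw [← inner_self_eq_norm_sq (𝕜 := ℂ)]
      congr 1
      calc (inner ℂ z (F N z) : ℂ) = inner ℂ z (F N (F N z)) := by
            rw [show F N (F N z) = (F N * F N) z from rfl, hFmul N]
        _ = inner ℂ (F N z) (F N z) := ((hFsa N).isSymmetric z (F N z)).symm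
    have hFNle : ‖F N z‖ ^ 2 ≤ ‖z‖ ^ 2 := by
      have h1 : ((inner ℂ z (F N z) : ℂ)).re ≤ ‖z‖ * ‖F N z‖ := by
        refine le_trans (Complex.re_le_norm _) ?_
        exact norm_inner_le_norm z (F N z)
      rw [hre] at h1
      nlinarith [norm_nonneg z, norm_nonneg (F N z), sq_nonneg (‖z‖ - ‖F N z‖)]
    calc ∑ n ∈ Finset.range N, ‖(E n) z‖ ^ 2
        = ∑ n ∈ Finset.range N, ((inner ℂ z ((E n) z) : ℂ)).re := by
          exact Finset.sum_congr rfl fun n _ => hterm n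
      _ = ((inner ℂ z (∑ n ∈ Finset.range N, (E n) z) : ℂ)).re := by
          rw [inner_sum, Complex.re_sum]
      _ = ((inner ℂ z (F N z) : ℂ)).re := by rw [htel]
      _ = ‖F N z‖ ^ 2 := hre
      _ ≤ ‖z‖ ^ 2 := hFNle
  -- unit vectors
  have hEne : ∀ n, ∃ u : H, (E n) u ≠ 0 := by
    intro n
    by_contra hcon
    push_neg at hcon
    have h1 : E n = 0 := ContinuousLinearMap.ext fun u => hcon u
    have h2 : F (n+1) = F n := by
      have := sub_eq_zero.mp h1
      exact this
    exact (hinc n).2 h2.symm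
  choose u hu using hEne
  set e : ℕ → H := fun n => (((‖(E n) (u n)‖)⁻¹ : ℝ) : ℂ) • (E n) (u n) with he
  have he1 : ∀ n, ‖e n‖ = 1 := by
    intro n
    rw [he]
    simp only [norm_smul, Complex.norm_real, Real.norm_eq_abs]
    rw [abs_of_nonneg (inv_nonneg.mpr (norm_nonneg _)),
      inv_mul_cancel₀ (norm_ne_zero_iff.mpr (hu n))]
  have hee : ∀ n, (E n) (e n) = e n := by
    intro n
    rw [he]
    simp only [map_smul]
    congr 1
    show (E n * E n) (u n) = (E n) (u n)
    rw [hoi n n, if_pos rfl]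
  open Stmt16Aux in
  have hl1 : ∀ n, |lseq n| ≤ 1 := fun n => by
    rw [abs_of_pos (lseq_pos n)]; exact lseq_le_one n
  open Stmt16Aux in
  have hm1 : ∀ n, |mseq n| ≤ 1 := fun n => by
    rw [abs_of_pos (mseq_pos n)]; exact mseq_le_one n
  obtain ⟨Dl, hDl⟩ := Stmt16Aux.exists_D E hsaE hoi hbes Stmt16Aux.lseq hl1
  obtain ⟨Dm, hDm⟩ := Stmt16Aux.exists_D E hsaE hoi hbes Stmt16Aux.mseq hm1
  obtain ⟨x, hx1, hx2⟩ := Stmt16Aux.exists_xvec E hsaE hoi hbes e he1 hee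
    Stmt16Aux.lseq Stmt16Aux.mseq Stmt16Aux.lseq_pos Stmt16Aux.mseq_pos Stmt16Aux.mseq_le_one
    Dl Dm hDl hDm Stmt16Aux.cx Stmt16Aux.cx_nonneg Stmt16Aux.cx_div_summable Stmt16Aux.cx_big
  obtain ⟨y, hy1, hy2⟩ := Stmt16Aux.exists_xvec E hsaE hoi hbes e he1 hee
    Stmt16Aux.mseq Stmt16Aux.lseq Stmt16Aux.mseq_pos Stmt16Aux.lseq_pos Stmt16Aux.lseq_le_one
    Dm Dl hDm hDl Stmt16Aux.cy Stmt16Aux.cy_nonneg Stmt16Aux.cy_div_summable Stmt16Aux.cy_big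
  exact ⟨Stmt16Aux.lseq, Stmt16Aux.mseq, Stmt16Aux.lseq_pos, Stmt16Aux.lseq_anti,
    Stmt16Aux.mseq_pos, Stmt16Aux.mseq_anti, Dl, Dm, hDl, hDm, x, y, hx1, hx2, hy1, hy2⟩

end
end
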